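/- arXiv:1507.05356 — 8 statements merged into one kernel-verified Lean document; each statement's English description precedes it below -/
import Mathlib

section
/- For integers n ≥ 1 and real numbers a, b > 0: ∑_{l=0}^{n} C(n,l) · ((a)_l (b)_{n-l} / (a+b)_n) · B_l(x) B_{n-l}(x) = ∑_{l=0}^{n} C(n,l) · ((a(b)_l + b(a)_l)/(a+b)_{l+1}) · B_l B_{n-l}(x) + (ab/((a+b+1)(a+b))) · n · B_{n-1}(x), as an identity of polynomials in x. -/
/-!
Both sides are Appell sequences in `n`, i.e. `P_n' = n P_{n-1}`. For the left side this is the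
Leibniz rule combined with the recurrence `w(i+1, j) + w(i, j+1) = w(i, j)` of the weights
`w(i, j) = (a)_i (b)_j / (a+b)_{i+j}`; for the right side it holds because `(B_n)` is Appell.
An Appell sequence of real polynomials is determined by the integrals `∫₀¹ P_n`, and these agree:
by parts, `C(i+j, i) ∫₀¹ B_i B_j = (-1)^(i-1) B_{i+j}` for `i, j ≥ 1`, and the recurrence makes
the resulting alternating sum of weights telescope to `w(1, n) ± w(n, 1)`, while `B_n = 0` for
odd `n > 1`. Only the recurrence of the weights enters, so the identity holds for any such `w`,
with coefficients `w(1, l) + w(l, 1)` and `w(1, 1)` on the right.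
-/

open Polynomial

open Finset Finset.Nat

theorem Nat.cast_add_one_choose_mul_of_add_eq {R : Type*} [CommSemiring R] {n i j : ℕ}
    (h : i + j = n) :
    ((n + 1).choose i * (j + 1) : R) = (n + 1) * n.choose i := by
  have e : (n + 1).choose i * (j + 1) = (n + 1) * n.choose i := by
    rw [show j + 1 = n + 1 - i by omega, ← Nat.choose_mul_succ_eq, mul_comm]
  exact_mod_cast congrArg (Nat.cast : ℕ → R) e

namespace Polynomial

variable {R : Type*} [CommRing R]

/-- At `n = 0` the factor `n` kills the junk value `P (0 - 1)`, so this says `P 0` is constant. -/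
def IsAppell (P : ℕ → R[X]) : Prop :=
  ∀ n, derivative (P n) = n * P (n - 1)

noncomputable def binomialProduct (w : ℕ → ℕ → R) (P Q : ℕ → R[X]) (n : ℕ) : R[X] :=
  ∑ p ∈ antidiagonal n, C (n.choose p.1 * w p.1 p.2) * (P p.1 * Q p.2)

noncomputable def binomialConvolution (s : ℕ → R) (P : ℕ → R[X]) (n : ℕ) : R[X] :=
  ∑ p ∈ antidiagonal n, C (n.choose p.1 * s p.1) * P p.2

namespace IsAppell

variable {P Q : ℕ → R[X]}

theorem add (hP : IsAppell P) (hQ : IsAppell Q) : IsAppell (P + Q) := fun n => by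
  simp only [Pi.add_apply, derivative_add, hP n, hQ n, mul_add]

theorem C_mul (hP : IsAppell P) (c : R) : IsAppell fun n => C c * P n := fun n => by
  rw [derivative_C_mul, hP n, mul_left_comm]

theorem natCast_mul_pred (hP : IsAppell P) : IsAppell fun n => (n : R[X]) * P (n - 1) :=
  fun n => by
  rw [derivative_mul, derivative_natCast, zero_mul, zero_add, hP (n - 1)]

theorem map {S : Type*} [CommRing S] (hP : IsAppell P) (f : R →+* S) :
    IsAppell fun n => (P n).map f := fun n => by
  rw [derivative_map, hP n, Polynomial.map_mul, Polynomial.map_natCast]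

theorem binomialConvolution (hP : IsAppell P) (s : ℕ → R) :
    IsAppell (binomialConvolution s P) := by
  intro n
  simp only [Polynomial.binomialConvolution, derivative_sum, derivative_C_mul, hP _]
  cases n with
  | zero => simp
  | succ n =>
    rw [sum_antidiagonal_succ', Nat.cast_zero, zero_mul, mul_zero, zero_add, Nat.add_sub_cancel,
      mul_sum]
    refine sum_congr rfl fun p hp => ?_
    have hchoose := Nat.cast_add_one_choose_mul_of_add_eq (R := R[X]) (mem_antidiagonal.mp hp)
    simp only [map_mul, map_natCast]
    push_cast
    linear_combination (C (s p.1) * P p.2) * hchoose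

theorem binomialProduct (hP : IsAppell P) (hQ : IsAppell Q) {w : ℕ → ℕ → R}
    (hw : ∀ i j, w (i + 1) j + w i (j + 1) = w i j) : IsAppell (binomialProduct w P Q) := by
  intro n
  simp only [Polynomial.binomialProduct, derivative_sum, derivative_C_mul]
  simp only [derivative_mul, hP _, hQ _, mul_add, sum_add_distrib]
  cases n with
  | zero => simp
  | succ n =>
    rw [sum_antidiagonal_succ, sum_antidiagonal_succ']
    simp only [Nat.cast_zero, zero_mul, mul_zero, zero_add, Nat.add_sub_cancel, mul_sum,
      ← sum_add_distrib]
    refine sum_congr rfl fun p hp => ?_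
    have hleft : ((n + 1).choose (p.1 + 1) * (p.1 + 1) : R[X]) = (n + 1) * n.choose p.1 := by
      exact_mod_cast congrArg (Nat.cast : ℕ → R[X]) (Nat.add_one_mul_choose_eq n p.1).symm
    have hright := Nat.cast_add_one_choose_mul_of_add_eq (R := R[X]) (mem_antidiagonal.mp hp)
    have hw' := congrArg C (hw p.1 p.2)
    simp only [map_mul, map_add, map_natCast] at hw' ⊢
    push_cast
    linear_combination (C (w (p.1 + 1) p.2) * (P p.1 * Q p.2)) * hleft
      + (C (w p.1 (p.2 + 1)) * (P p.1 * Q p.2)) * hright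
      + ((n + 1) * n.choose p.1 * (P p.1 * Q p.2) : R[X]) * hw'

end IsAppell

theorem eq_of_derivative_eq_of_integral_eq {p q : ℝ[X]} (hd : derivative p = derivative q)
    (hi : ∫ x in (0 : ℝ)..1, p.eval x = ∫ x in (0 : ℝ)..1, q.eval x) : p = q := by
  have hC : p - q = C ((p - q).coeff 0) :=
    eq_C_of_derivative_eq_zero (by rw [derivative_sub, hd, sub_self])
  have hint : ∫ x in (0 : ℝ)..1, (p - q).eval x = 0 := by
    simp only [eval_sub]
    rw [intervalIntegral.integral_sub (p.continuous.intervalIntegrable _ _)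
      (q.continuous.intervalIntegrable _ _), hi, sub_self]
  rw [hC] at hint
  simp only [eval_C, intervalIntegral.integral_const, sub_zero, smul_eq_mul, one_mul] at hint
  rw [← sub_eq_zero, hC, hint, C_0]

theorem IsAppell.ext_of_integral_eq {P Q : ℕ → ℝ[X]} (hP : IsAppell P) (hQ : IsAppell Q)
    (h : ∀ n, ∫ x in (0 : ℝ)..1, (P n).eval x = ∫ x in (0 : ℝ)..1, (Q n).eval x) : P = Q := by
  funext n
  induction n with
  | zero => exact eq_of_derivative_eq_of_integral_eq (by simp [hP 0, hQ 0]) (h 0)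
  | succ n ih =>
    exact eq_of_derivative_eq_of_integral_eq (by rw [hP, hQ, Nat.add_sub_cancel, ih]) (h _)

theorem integral_eval_binomialProduct (w : ℕ → ℕ → ℝ) (P Q : ℕ → ℝ[X]) (n : ℕ) :
    ∫ x in (0 : ℝ)..1, (binomialProduct w P Q n).eval x
      = ∑ p ∈ antidiagonal n, n.choose p.1 * w p.1 p.2 *
          ∫ x in (0 : ℝ)..1, (P p.1).eval x * (Q p.2).eval x := by
  simp only [binomialProduct, eval_finsetSum, eval_mul, eval_C]
  rw [intervalIntegral.integral_finsetSum fun p _ =>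
    (continuous_const.mul ((P p.1).continuous.mul (Q p.2).continuous)).intervalIntegrable _ _]
  simp only [intervalIntegral.integral_const_mul]

theorem integral_eval_binomialConvolution (s : ℕ → ℝ) (P : ℕ → ℝ[X]) (n : ℕ) :
    ∫ x in (0 : ℝ)..1, (binomialConvolution s P n).eval x
      = ∑ p ∈ antidiagonal n, n.choose p.1 * s p.1 * ∫ x in (0 : ℝ)..1, (P p.2).eval x := by
  simp only [binomialConvolution, eval_finsetSum, eval_mul, eval_C]
  rw [intervalIntegral.integral_finsetSum fun p _ =>
    (continuous_const.mul (P p.2).continuous).intervalIntegrable _ _]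
  simp only [intervalIntegral.integral_const_mul]

end Polynomial

theorem sum_antidiagonal_neg_one_pow_mul_eq {R : Type*} [CommRing R] {w : ℕ → ℕ → R}
    (hw : ∀ i j, w (i + 1) j + w i (j + 1) = w i j) (m : ℕ) :
    ∑ p ∈ antidiagonal m, (-1) ^ p.1 * w (p.1 + 1) (p.2 + 1)
      = w 1 (m + 2) + (-1) ^ m * w (m + 2) 1 := by
  -- the sum telescopes along the antidiagonal `m + 1`
  set V : ℕ × ℕ → R := fun p => (-1) ^ p.1 * w (p.1 + 1) (p.2 + 1)
  have hterm : ∀ p ∈ antidiagonal m,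
      (-1) ^ p.1 * w (p.1 + 1) (p.2 + 1) = V (p.1, p.2 + 1) - V (p.1 + 1, p.2) := fun p _ => by
    simp only [V, ← hw (p.1 + 1) (p.2 + 1)]
    ring
  have hleft := sum_antidiagonal_succ (n := m) (f := V)
  have hright := sum_antidiagonal_succ' (n := m) (f := V)
  rw [sum_congr rfl hterm, sum_sub_distrib]
  simp only [V] at hleft hright ⊢
  linear_combination hleft - hright

noncomputable def realBernoulli (n : ℕ) : ℝ[X] :=
  (Polynomial.bernoulli n).map (algebraMap ℚ ℝ)

theorem eval_realBernoulli (n : ℕ) (x : ℝ) : (realBernoulli n).eval x = bernoulliFun n x := rfl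

theorem isAppell_realBernoulli : IsAppell realBernoulli :=
  IsAppell.map (fun n => derivative_bernoulli n) _

theorem integral_bernoulliFun_mul_by_parts (k l : ℕ) :
    ((k + 1) * ∫ x in (0 : ℝ)..1, bernoulliFun k x * bernoulliFun (l + 1) x)
      + (l + 1) * ∫ x in (0 : ℝ)..1, bernoulliFun (k + 1) x * bernoulliFun l x
      = bernoulliFun (k + 1) 1 * bernoulliFun (l + 1) 1
        - bernoulliFun (k + 1) 0 * bernoulliFun (l + 1) 0 := by
  have hderiv : ∀ x, HasDerivAt (fun y => bernoulliFun (k + 1) y * bernoulliFun (l + 1) y)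
      ((k + 1) * (bernoulliFun k x * bernoulliFun (l + 1) x)
        + (l + 1) * (bernoulliFun (k + 1) x * bernoulliFun l x)) x := fun x => by
    refine ((hasDerivAt_bernoulliFun (k + 1) x).fun_mul
      (hasDerivAt_bernoulliFun (l + 1) x)).congr_deriv ?_
    push_cast [Nat.add_sub_cancel]
    ring
  have hint : ∀ i j, IntervalIntegrable (fun x => bernoulliFun i x * bernoulliFun j x)
      MeasureTheory.volume 0 1 := fun i j =>
    ((continuous_bernoulliFun i).mul (continuous_bernoulliFun j)).intervalIntegrable _ _
  rw [← intervalIntegral.integral_eq_sub_of_hasDerivAt (fun x _ => hderiv x)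
      (((hint _ _).const_mul _).add ((hint _ _).const_mul _)),
    intervalIntegral.integral_add ((hint _ _).const_mul _) ((hint _ _).const_mul _),
    intervalIntegral.integral_const_mul, intervalIntegral.integral_const_mul]

theorem integral_bernoulliFun_mul_bernoulliFun (i j : ℕ) :
    ((i + j + 2).choose (i + 1) : ℝ) *
        ∫ x in (0 : ℝ)..1, bernoulliFun (i + 1) x * bernoulliFun (j + 1) x
      = (-1) ^ i * _root_.bernoulli (i + j + 2) := by
  induction i generalizing j with
  | zero =>
    have h := integral_bernoulliFun_mul_by_parts 0 (j + 1)
    simp only [bernoulliFun_zero, one_mul, integral_bernoulliFun_eq_zero (Nat.succ_ne_zero _),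
      bernoulliFun_endpoints_eq_of_ne_one (show j + 1 + 1 ≠ 1 by omega), bernoulliFun_eval_one 1,
      if_pos, bernoulliFun_eval_zero] at h
    rw [zero_add, Nat.choose_one_right, pow_zero, one_mul]
    push_cast at h ⊢
    linear_combination h
  | succ i ih =>
    have h := integral_bernoulliFun_mul_by_parts (i + 1) (j + 1)
    rw [bernoulliFun_endpoints_eq_of_ne_one (show i + 1 + 1 ≠ 1 by omega),
      bernoulliFun_endpoints_eq_of_ne_one (show j + 1 + 1 ≠ 1 by omega), sub_self] at h
    have hchoose := congrArg (Nat.cast : ℕ → ℝ) (Nat.choose_succ_right_eq (i + j + 3) (i + 1))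
    rw [show i + j + 3 - (i + 1) = j + 2 by omega] at hchoose
    have ih' := ih (j + 1)
    rw [show i + (j + 1) + 2 = i + j + 3 by omega] at ih'
    rw [show i + 1 + j + 2 = i + j + 3 by omega]
    push_cast at h hchoose ⊢
    refine mul_left_cancel₀ (show (j + 2 : ℝ) ≠ 0 by positivity) ?_
    linear_combination ((i + j + 3).choose (i + 2) : ℝ) * h
      - (∫ x in (0 : ℝ)..1, bernoulliFun (i + 1) x * bernoulliFun (j + 1 + 1) x) * hchoose
      - (j + 2 : ℝ) * ih'

theorem integral_eval_binomialConvolution_realBernoulli (s : ℕ → ℝ) (n : ℕ) :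
    ∫ x in (0 : ℝ)..1, (binomialConvolution s realBernoulli n).eval x = s n := by
  rw [integral_eval_binomialConvolution, sum_eq_single_of_mem (n, 0) (by simp)]
  · simp [eval_realBernoulli]
  · rintro ⟨i, j⟩ hp hne
    have hj : j ≠ 0 := by
      rintro rfl
      exact hne (by simpa using (mem_antidiagonal.mp hp))
    simp [eval_realBernoulli, integral_bernoulliFun, hj]

theorem integral_eval_binomialProduct_realBernoulli_add_two (w : ℕ → ℕ → ℝ) (m : ℕ) :
    ∫ x in (0 : ℝ)..1, (binomialProduct w realBernoulli realBernoulli (m + 2)).eval x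
      = _root_.bernoulli (m + 2) * ∑ p ∈ antidiagonal m, (-1) ^ p.1 * w (p.1 + 1) (p.2 + 1) := by
  rw [integral_eval_binomialProduct, sum_antidiagonal_succ, sum_antidiagonal_succ']
  simp only [eval_realBernoulli, bernoulliFun_zero, one_mul, mul_one,
    integral_bernoulliFun_eq_zero (Nat.succ_ne_zero _), mul_zero, zero_add, mul_sum]
  refine sum_congr rfl fun p hp => ?_
  rw [← (mem_antidiagonal.mp hp)]
  linear_combination w (p.1 + 1) (p.2 + 1) * integral_bernoulliFun_mul_bernoulliFun p.1 p.2

theorem integral_eval_binomialProduct_realBernoulli_eq {w : ℕ → ℕ → ℝ}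
    (hw : ∀ i j, w (i + 1) j + w i (j + 1) = w i j) (n : ℕ) :
    ∫ x in (0 : ℝ)..1, (binomialProduct w realBernoulli realBernoulli n).eval x
      = ∫ x in (0 : ℝ)..1, (binomialConvolution (fun l => (w 1 l + w l 1) * _root_.bernoulli l)
          realBernoulli n + C (w 1 1) * (n * realBernoulli (n - 1))).eval x := by
  simp only [eval_add]
  rw [intervalIntegral.integral_add ((Polynomial.continuous _).intervalIntegrable _ _)
    ((Polynomial.continuous _).intervalIntegrable _ _),
    integral_eval_binomialConvolution_realBernoulli]
  simp only [eval_mul, eval_C, eval_natCast, eval_realBernoulli,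
    intervalIntegral.integral_const_mul, integral_bernoulliFun]
  match n with
  | 0 => simp [integral_eval_binomialProduct, eval_realBernoulli, ← hw 0 0]
  | 1 =>
    rw [integral_eval_binomialProduct, sum_antidiagonal_succ]
    simp only [antidiagonal_zero, sum_singleton, zero_add, eval_realBernoulli, bernoulliFun_zero,
      one_mul, mul_one, integral_bernoulliFun_eq_zero one_ne_zero, _root_.bernoulli_one]
    push_cast
    ring
  | m + 2 =>
    rw [integral_eval_binomialProduct_realBernoulli_add_two,
      sum_antidiagonal_neg_one_pow_mul_eq hw]
    rcases Nat.even_or_odd m with hm | hm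
    · simp only [hm.neg_one_pow, Nat.add_one_sub_one, Nat.add_eq_zero_iff, one_ne_zero, and_false,
        if_false]
      ring
    · simp [bernoulli_eq_zero_of_odd (hm.add_even even_two) (by omega)]

theorem binomialProduct_realBernoulli_eq {w : ℕ → ℕ → ℝ}
    (hw : ∀ i j, w (i + 1) j + w i (j + 1) = w i j) :
    binomialProduct w realBernoulli realBernoulli
      = binomialConvolution (fun l => (w 1 l + w l 1) * _root_.bernoulli l) realBernoulli
        + fun n => C (w 1 1) * (n * realBernoulli (n - 1)) :=
  (isAppell_realBernoulli.binomialProduct isAppell_realBernoulli hw).ext_of_integral_eq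
    ((isAppell_realBernoulli.binomialConvolution _).add
      (isAppell_realBernoulli.natCast_mul_pred.C_mul _))
    (integral_eval_binomialProduct_realBernoulli_eq hw)

/-- `B(a + i, b + j) / B(a, b)`, the moment `E[tⁱ (1 - t)ʲ]` of `t ∼ Beta(a, b)`. -/
noncomputable def betaWeight {K : Type*} [Field K] (a b : K) (i j : ℕ) : K :=
  (ascPochhammer K i).eval a * (ascPochhammer K j).eval b / (ascPochhammer K (i + j)).eval (a + b)

theorem betaWeight_succ_left_add_succ_right {K : Type*} [Field K] {a b : K} {i j : ℕ}
    (h : (ascPochhammer K (i + j + 1)).eval (a + b) ≠ 0) :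
    betaWeight a b (i + 1) j + betaWeight a b i (j + 1) = betaWeight a b i j := by
  rw [ascPochhammer_succ_eval] at h
  have h₁ : (ascPochhammer K (i + j)).eval (a + b) ≠ 0 := left_ne_zero_of_mul h
  have h₂ : a + b + (i + j : ℕ) ≠ 0 := right_ne_zero_of_mul h
  simp only [betaWeight, show i + 1 + j = i + j + 1 by omega, ← add_assoc,
    ascPochhammer_succ_eval]
  push_cast at h₂ ⊢
  field_simp
  ring

theorem betaWeight_one_left_add_one_right {K : Type*} [Field K] (a b : K) (l : ℕ) :
    betaWeight a b 1 l + betaWeight a b l 1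
      = (a * (ascPochhammer K l).eval b + b * (ascPochhammer K l).eval a)
        / (ascPochhammer K (l + 1)).eval (a + b) := by
  simp only [betaWeight, ascPochhammer_one, eval_X, add_comm 1 l]
  ring

theorem betaWeight_one_one {K : Type*} [Field K] (a b : K) :
    betaWeight a b 1 1 = a * b / ((a + b + 1) * (a + b)) := by
  simp only [betaWeight, ascPochhammer_one, eval_X, Nat.reduceAdd, ascPochhammer_succ_eval]
  ring

theorem general_bernoulli_convolution_general (n : ℕ) (a b : ℝ)
    (ha : 0 < a) (hb : 0 < b) (x : ℝ) :
    ∑ l ∈ Finset.range (n + 1), (n.choose l : ℝ) *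
        ((ascPochhammer ℝ l).eval a * (ascPochhammer ℝ (n - l)).eval b /
          (ascPochhammer ℝ n).eval (a + b)) *
        (aeval x (Polynomial.bernoulli l)) * (aeval x (Polynomial.bernoulli (n - l)))
      = (∑ l ∈ Finset.range (n + 1), (n.choose l : ℝ) *
          ((a * (ascPochhammer ℝ l).eval b + b * (ascPochhammer ℝ l).eval a) /
            (ascPochhammer ℝ (l + 1)).eval (a + b)) *
          ((bernoulli l : ℚ) : ℝ) * aeval x (Polynomial.bernoulli (n - l)))
        + a * b / ((a + b + 1) * (a + b)) * n * aeval x (Polynomial.bernoulli (n - 1)) := by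
  have hw : ∀ i j, betaWeight a b (i + 1) j + betaWeight a b i (j + 1) = betaWeight a b i j :=
    fun i j => betaWeight_succ_left_add_succ_right (ascPochhammer_pos _ _ (by linarith)).ne'
  have h := congrArg (eval x) (congrFun (binomialProduct_realBernoulli_eq hw) n)
  simp only [binomialProduct, binomialConvolution, Pi.add_apply, eval_add, eval_finsetSum,
    eval_mul, eval_C, eval_natCast, realBernoulli, eval_map_algebraMap,
    sum_antidiagonal_eq_sum_range_succ_mk] at h
  refine (sum_congr rfl fun l hl => ?_).trans (h.trans ?_)
  · rw [betaWeight, Nat.add_sub_cancel' (mem_range_succ_iff.mp hl)]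
    ring
  · simp only [betaWeight_one_left_add_one_right, betaWeight_one_one, Nat.succ_eq_add_one]
    congr 1
    exacts [sum_congr rfl fun l _ => by ring, by ring]

theorem general_bernoulli_convolution (n : ℕ) (hn : 1 ≤ n) (a b : ℝ)
    (ha : 0 < a) (hb : 0 < b) (x : ℝ) :
    ∑ l ∈ Finset.range (n + 1), (n.choose l : ℝ) *
        ((ascPochhammer ℝ l).eval a * (ascPochhammer ℝ (n - l)).eval b /
          (ascPochhammer ℝ n).eval (a + b)) *
        (aeval x (Polynomial.bernoulli l)) * (aeval x (Polynomial.bernoulli (n - l)))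
      = (∑ l ∈ Finset.range (n + 1), (n.choose l : ℝ) *
          ((a * (ascPochhammer ℝ l).eval b + b * (ascPochhammer ℝ l).eval a) /
            (ascPochhammer ℝ (l + 1)).eval (a + b)) *
          ((bernoulli l : ℚ) : ℝ) * aeval x (Polynomial.bernoulli (n - l)))
        + a * b / ((a + b + 1) * (a + b)) * n * aeval x (Polynomial.bernoulli (n - 1)) :=
  general_bernoulli_convolution_general n a b ha hb x
end

section
/- For all integers n ≥ 1, (n+2)·∑_{l=0}^{n} B_l(x) B_{n-l}(x) = 2·∑_{l=0}^{n} C(n+2, l+2) B_l B_{n-l}(x) + C(n+2,3) B_{n-1}(x), as an identity of polynomials in x. -/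
/-!
Let `D n` be the difference of the two sides, as a polynomial. Since `B_k' = k B_{k-1}`, one
finds `D (n + 1)' = (n + 3) D n`. Since `B_k(1 + x) = B_k(x) + k x^{k-1}`, the difference
`D (n + 1) (1 + x) - D (n + 1) x` is a combination of convolutions of `B_l(x)` with monomials,
which cancel by the double hockey-stick identity `∑_{i+j=m} C(i,k) (j+1) = C(m+2,k+2)`.
So `D (n + 1)` is `1`-periodic, hence constant, and `D n = D (n + 1)' / (n + 3) = 0`.
-/

open Polynomial Finset Finset.Nat

namespace Nat

theorem sum_antidiagonal_choose (m k : ℕ) :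
    ∑ p ∈ antidiagonal m, p.1.choose k = (m + 1).choose (k + 1) := by
  induction m with
  | zero => cases k <;> simp [choose_eq_zero_of_lt]
  | succ m ih => rw [sum_antidiagonal_succ', ih, choose_succ_succ' (m + 1), add_comm]

theorem sum_antidiagonal_choose_mul_succ (m k : ℕ) :
    ∑ p ∈ antidiagonal m, p.1.choose k * (p.2 + 1) = (m + 2).choose (k + 2) := by
  induction m with
  | zero => cases k <;> simp [choose_eq_zero_of_lt]
  | succ m ih =>
    have split (p : ℕ × ℕ) :
        p.1.choose k * (p.2 + 1 + 1) = p.1.choose k * (p.2 + 1) + p.1.choose k := rfl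
    rw [sum_antidiagonal_succ']
    simp only [split, sum_add_distrib, ih, sum_antidiagonal_choose]
    rw [choose_succ_succ' (m + 2) (k + 1), choose_succ_succ' (m + 1) k]
    ring

theorem sum_antidiagonal_mul (n : ℕ) :
    ∑ p ∈ antidiagonal n, p.1 * p.2 = (n + 1).choose 3 := by
  cases n with
  | zero => simp [choose_eq_zero_of_lt]
  | succ m =>
    rw [sum_antidiagonal_succ']
    simpa using sum_antidiagonal_choose_mul_succ m 1

theorem cast_choose_succ_mul {R : Type*} [Semiring R] {N k r : ℕ} (h : k + r = N + 1) :
    ((N + 1).choose k : R) * r = N.choose k * (N + 1) := by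
  have := choose_mul_succ_eq N k
  rw [show N + 1 - k = r by omega] at this
  exact_mod_cast congrArg (Nat.cast : ℕ → R) this.symm

end Nat

namespace Polynomial

theorem eq_C_eval_zero_of_periodic {R : Type*} [CommRing R] [IsDomain R] [CharZero R]
    {p : R[X]} {c : R} (hc : c ≠ 0) (h : Function.Periodic p.eval c) : p = C (p.eval 0) := by
  have hinj : Function.Injective fun n : ℕ => (n : R) * c := fun m n hmn =>
    Nat.cast_injective (mul_right_cancel₀ hc hmn)
  refine eq_of_infinite_eval_eq _ _ ((Set.infinite_range_of_injective hinj).mono ?_)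
  rintro _ ⟨n, rfl⟩
  simpa using h.nat_mul_eq n

section Appell

variable {R : Type*} [CommSemiring R] {f : ℕ → R[X]}

theorem derivative_sum_antidiagonal_mul (hf : ∀ k, derivative (f k) = k * f (k - 1)) (n : ℕ) :
    derivative (∑ p ∈ antidiagonal (n + 1), f p.1 * f p.2)
      = (n + 2) * ∑ p ∈ antidiagonal n, f p.1 * f p.2 := by
  simp only [derivative_sum, derivative_mul, hf, sum_add_distrib]
  rw [sum_antidiagonal_succ, sum_antidiagonal_succ', mul_sum]
  simp only [Nat.cast_zero, zero_mul, mul_zero, zero_add, Nat.add_sub_cancel, ← sum_add_distrib]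
  refine sum_congr rfl fun p hp => ?_
  rw [← mem_antidiagonal.1 hp]
  push_cast
  ring

theorem derivative_sum_antidiagonal_C_mul (hf : ∀ k, derivative (f k) = k * f (k - 1))
    (a : ℕ → R) (n : ℕ) :
    derivative (∑ p ∈ antidiagonal (n + 1), C (a p.1) * f p.2)
      = ∑ p ∈ antidiagonal n, C (a p.1 * (p.2 + 1)) * f p.2 := by
  simp only [derivative_sum, derivative_C_mul, hf]
  rw [sum_antidiagonal_succ']
  simp only [Nat.cast_zero, zero_mul, mul_zero, zero_add, Nat.add_sub_cancel]
  refine sum_congr rfl fun p _ => ?_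
  simp only [C_mul, map_add, map_natCast, map_one, Nat.cast_add, Nat.cast_one]
  ring

end Appell

noncomputable def matiyasevichDefect (n : ℕ) : ℚ[X] :=
  C ((n : ℚ) + 2) * ∑ p ∈ antidiagonal n, bernoulli p.1 * bernoulli p.2 -
    (C 2 * ∑ p ∈ antidiagonal n,
        C ((n + 2).choose (p.1 + 2) * _root_.bernoulli p.1) * bernoulli p.2 +
      C ((n + 2).choose 3 : ℚ) * bernoulli (n - 1))

theorem derivative_matiyasevichDefect_succ (n : ℕ) :
    derivative (matiyasevichDefect (n + 1)) = C ((n : ℚ) + 3) * matiyasevichDefect n := by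
  have weights : ∀ p ∈ antidiagonal n,
      C ((n + 3).choose (p.1 + 2) * _root_.bernoulli p.1 * (p.2 + 1)) * bernoulli p.2
        = C ((n : ℚ) + 3) *
            (C ((n + 2).choose (p.1 + 2) * _root_.bernoulli p.1) * bernoulli p.2) := by
    intro p hp
    have := Nat.cast_choose_succ_mul (R := ℚ) (N := n + 2) (k := p.1 + 2) (r := p.2 + 1)
      (by rw [← mem_antidiagonal.1 hp]; ring)
    push_cast at this
    rw [← mul_assoc, ← C_mul]
    congr 2
    linear_combination _root_.bernoulli p.1 * this
  have last := Nat.cast_choose_succ_mul (R := ℚ[X]) (N := n + 2) (k := 3) (r := n) (by ring)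
  simp only [matiyasevichDefect, derivative_sub, derivative_add, derivative_C_mul,
    derivative_sum_antidiagonal_mul derivative_bernoulli,
    derivative_sum_antidiagonal_C_mul derivative_bernoulli
      (fun i => ((n + 1 + 2).choose (i + 2) : ℚ) * _root_.bernoulli i) n,
    sum_congr rfl weights, ← mul_sum, derivative_bernoulli, Nat.add_sub_cancel]
  simp only [map_add, map_natCast, map_ofNat]
  push_cast at last ⊢
  linear_combination (-(bernoulli (n - 1))) * last

section Shift

variable (x : ℚ)

theorem sum_antidiagonal_bernoulli_eval_one_add_mul (n : ℕ) :
    ∑ p ∈ antidiagonal n, (bernoulli p.1).eval (1 + x) * (bernoulli p.2).eval (1 + x)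
      = ∑ p ∈ antidiagonal n, (bernoulli p.1).eval x * (bernoulli p.2).eval x
        + 2 * ∑ p ∈ antidiagonal n, (bernoulli p.1).eval x * (p.2 * x ^ (p.2 - 1))
        + ∑ p ∈ antidiagonal n, (p.1 * x ^ (p.1 - 1)) * (p.2 * x ^ (p.2 - 1)) := by
  have hswap : ∑ p ∈ antidiagonal n, (p.1 * x ^ (p.1 - 1)) * (bernoulli p.2).eval x
      = ∑ p ∈ antidiagonal n, (bernoulli p.1).eval x * (p.2 * x ^ (p.2 - 1)) := by
    rw [← sum_antidiagonal_swap]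
    simp only [Prod.fst_swap, Prod.snd_swap, mul_comm]
  simp only [bernoulli_eval_one_add, add_mul, mul_add, sum_add_distrib, hswap]
  ring

theorem sum_antidiagonal_mul_pow_mul_mul_pow {R : Type*} [CommSemiring R] (m : ℕ) (y : R) :
    ∑ p ∈ antidiagonal (m + 1), (p.1 * y ^ (p.1 - 1)) * (p.2 * y ^ (p.2 - 1))
      = (m + 2).choose 3 * y ^ (m - 1) := by
  rw [show (m + 2).choose 3 = ∑ p ∈ antidiagonal (m + 1), p.1 * p.2 from
    (Nat.sum_antidiagonal_mul (m + 1)).symm, Nat.cast_sum, sum_mul]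
  refine sum_congr rfl fun p hp => ?_
  have hp := mem_antidiagonal.1 hp
  rcases Nat.eq_zero_or_pos p.1 with h1 | h1
  · simp [h1]
  rcases Nat.eq_zero_or_pos p.2 with h2 | h2
  · simp [h2]
  rw [Nat.cast_mul, mul_mul_mul_comm, ← pow_add, show p.1 - 1 + (p.2 - 1) = m - 1 by omega]

theorem sum_antidiagonal_bernoulli_eval_mul_succ_mul_pow (m : ℕ) :
    ∑ p ∈ antidiagonal m, (bernoulli p.1).eval x * ((p.2 + 1) * x ^ p.2)
      = ∑ p ∈ antidiagonal m, (m + 2).choose (p.1 + 2) * _root_.bernoulli p.1 * x ^ p.2 := by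
  calc _ = ∑ p ∈ antidiagonal m, ∑ k ∈ range (m + 1),
        _root_.bernoulli k * x ^ (m - k) * (p.1.choose k * (p.2 + 1) : ℕ) := by
        refine sum_congr rfl fun p hp => ?_
        have hp := mem_antidiagonal.1 hp
        rw [bernoulli, eval_finsetSum, sum_mul,
          ← sum_subset (range_subset_range.2 (by omega : p.1 + 1 ≤ m + 1))]
        · refine sum_congr rfl fun k hk => ?_
          have hk : k ≤ p.1 := by simpa [Nat.lt_succ_iff] using hk
          rw [eval_monomial, show m - k = (p.1 - k) + p.2 by omega, pow_add]
          push_cast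
          ring
        · intro k _ hk
          simp only [mem_range, not_lt] at hk
          simp [Nat.choose_eq_zero_of_lt (by omega : p.1 < k)]
    _ = ∑ k ∈ range (m + 1), _root_.bernoulli k * x ^ (m - k)
          * ∑ p ∈ antidiagonal m, (p.1.choose k * (p.2 + 1) : ℕ) := by
        rw [sum_comm]
        simp only [← mul_sum, Nat.cast_sum]
    _ = _ := by
        rw [sum_antidiagonal_eq_sum_range_succ_mk]
        refine sum_congr rfl fun k _ => ?_
        rw [Nat.sum_antidiagonal_choose_mul_succ]
        ring

theorem sum_antidiagonal_bernoulli_eval_mul_mul_pow (m : ℕ) :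
    ((m : ℚ) + 3) * ∑ p ∈ antidiagonal (m + 1), (bernoulli p.1).eval x * (p.2 * x ^ (p.2 - 1))
      = ∑ p ∈ antidiagonal (m + 1),
          (m + 3).choose (p.1 + 2) * _root_.bernoulli p.1 * (p.2 * x ^ (p.2 - 1)) := by
  rw [sum_antidiagonal_succ', sum_antidiagonal_succ']
  simp only [Nat.cast_zero, zero_mul, mul_zero, zero_add, Nat.add_sub_cancel, Nat.cast_add,
    Nat.cast_one]
  rw [sum_antidiagonal_bernoulli_eval_mul_succ_mul_pow, mul_sum]
  refine sum_congr rfl fun p hp => ?_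
  have := Nat.cast_choose_succ_mul (R := ℚ) (N := m + 2) (k := p.1 + 2) (r := p.2 + 1)
    (by rw [← mem_antidiagonal.1 hp]; ring)
  push_cast at this
  linear_combination (-(_root_.bernoulli p.1 * x ^ p.2)) * this

end Shift

theorem matiyasevichDefect_succ_periodic (m : ℕ) :
    Function.Periodic (matiyasevichDefect (m + 1)).eval 1 := by
  intro x
  rw [add_comm x 1]
  have last := Nat.cast_choose_succ_mul (R := ℚ) (N := m + 2) (k := 3) (r := m) (by ring)
  have hcross := sum_antidiagonal_bernoulli_eval_mul_mul_pow x m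
  simp only [matiyasevichDefect, eval_sub, eval_add, eval_mul, eval_C, eval_finsetSum]
  rw [sum_antidiagonal_bernoulli_eval_one_add_mul, sum_antidiagonal_mul_pow_mul_mul_pow]
  simp only [bernoulli_eval_one_add, mul_add, sum_add_distrib, Nat.add_sub_cancel,
    show m + 1 + 2 = m + 3 from rfl]
  rw [show m + 2 + 1 = m + 3 from rfl] at last
  push_cast at last ⊢
  linear_combination 2 * hcross - x ^ (m - 1) * last

theorem matiyasevichDefect_eq_zero (n : ℕ) : matiyasevichDefect n = 0 := by
  have h := derivative_matiyasevichDefect_succ n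
  rw [eq_C_eval_zero_of_periodic one_ne_zero (matiyasevichDefect_succ_periodic n),
    derivative_C, eq_comm, mul_eq_zero, C_eq_zero] at h
  exact h.resolve_left (by positivity)

end Polynomial

theorem bernoulli_poly_matiyasevich_general (n : ℕ) (x : ℚ) :
    ((n : ℚ) + 2) * ∑ l ∈ Finset.range (n + 1),
        (Polynomial.bernoulli l).eval x * (Polynomial.bernoulli (n - l)).eval x
      = 2 * (∑ l ∈ Finset.range (n + 1),
          ((n + 2).choose (l + 2) : ℚ) * _root_.bernoulli l * (Polynomial.bernoulli (n - l)).eval x)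
        + ((n + 2).choose 3 : ℚ) * (Polynomial.bernoulli (n - 1)).eval x := by
  have h := congrArg (eval x) (matiyasevichDefect_eq_zero n)
  simp only [matiyasevichDefect, eval_sub, eval_add, eval_mul, eval_C, eval_finsetSum, eval_zero,
    sum_antidiagonal_eq_sum_range_succ_mk] at h
  linear_combination h

theorem bernoulli_poly_matiyasevich (n : ℕ) (hn : 1 ≤ n) (x : ℚ) :
    ((n : ℚ) + 2) * ∑ l ∈ Finset.range (n + 1),
        (Polynomial.bernoulli l).eval x * (Polynomial.bernoulli (n - l)).eval x
      = 2 * (∑ l ∈ Finset.range (n + 1),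
          ((n + 2).choose (l + 2) : ℚ) * _root_.bernoulli l * (Polynomial.bernoulli (n - l)).eval x)
        + ((n + 2).choose 3 : ℚ) * (Polynomial.bernoulli (n - 1)).eval x :=
  bernoulli_poly_matiyasevich_general n x
end

section
/- For integers n ≥ 1: (n/2)·∑_{l=1}^{n-1} (B_l(x)/l)·(B_{n-l}(x)/(n-l)) = ∑_{l=1}^{n} C(n,l) (B_l/l) B_{n-l}(x) + (n/2) B_{n-1}(x) + H_{n-1} B_n(x), where H_{n-1} is the (n-1)-st harmonic number. -/
open Polynomial Finset Nat

noncomputable def intl (p : ℚ[X]) : ℚ := p.sum fun i a => a / (i + 1)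

lemma intl_add (p q : ℚ[X]) : intl (p + q) = intl p + intl q := by
  unfold intl
  exact Polynomial.sum_add_index p q _ (fun i => by simp) (fun i a b => add_div a b _)

lemma intl_zero : intl 0 = 0 := by simp [intl]

lemma intl_smul (c : ℚ) (p : ℚ[X]) : intl (c • p) = c * intl p := by
  unfold intl
  rw [Polynomial.sum_smul_index (hf := fun i => by simp)]
  rw [Polynomial.sum_def, Polynomial.sum_def, Finset.mul_sum]
  exact Finset.sum_congr rfl fun i _ => (mul_div_assoc _ _ _)

lemma intl_C_mul (c : ℚ) (p : ℚ[X]) : intl (C c * p) = c * intl p := by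
  rw [← smul_eq_C_mul, intl_smul]

lemma intl_monomial (n : ℕ) (a : ℚ) : intl (monomial n a) = a / (n + 1) := by
  unfold intl
  exact Polynomial.sum_monomial_index a _ (by simp)

lemma intl_C (c : ℚ) : intl (C c) = c := by
  rw [← monomial_zero_left, intl_monomial]; norm_num

lemma intl_sum {s : Finset ℕ} (f : ℕ → ℚ[X]) : intl (∑ i ∈ s, f i) = ∑ i ∈ s, intl (f i) := by
  classical
  induction s using Finset.induction with
  | empty => simp [intl_zero]
  | insert _ _ h ih => rw [Finset.sum_insert h, Finset.sum_insert h, intl_add, ih]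

lemma intl_derivative (p : ℚ[X]) : intl (derivative p) = p.eval 1 - p.eval 0 := by
  induction p using Polynomial.induction_on' with
  | add p q hp hq => rw [derivative_add, intl_add, hp, hq]; simp; ring
  | monomial n a =>
    rw [derivative_monomial, intl_monomial]
    cases n with
    | zero => simp
    | succ k =>
      have hk : (k : ℚ) + 1 ≠ 0 := by positivity
      simp only [Nat.add_sub_cancel, eval_monomial, one_pow, mul_one]
      push_cast
      rw [zero_pow (by omega)]
      field_simp
      simp

lemma intl_ibp (p q : ℚ[X]) :
    intl (derivative p * q) = (p * q).eval 1 - (p * q).eval 0 - intl (p * derivative q) := by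
  have h := intl_derivative (p * q)
  rw [derivative_mul, intl_add] at h
  linarith

lemma intl_X_pow (n : ℕ) : intl (X ^ n) = 1 / (n + 1) := by
  rw [← monomial_one_right_eq_X_pow, intl_monomial]

lemma bern_eq_C_mul_deriv (k : ℕ) :
    Polynomial.bernoulli k = C (1 / ((k : ℚ) + 1)) * derivative (Polynomial.bernoulli (k + 1)) := by
  rw [derivative_bernoulli_add_one]
  have h : ((k : ℚ[X]) + 1) = C ((k : ℚ) + 1) := by rw [C_add, C_1, C_eq_natCast]
  rw [h, ← mul_assoc, ← C_mul]
  have hk : (k : ℚ) + 1 ≠ 0 := by positivity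
  rw [one_div, inv_mul_cancel₀ hk]; simp

lemma intl_bernoulli (m : ℕ) (hm : 1 ≤ m) : intl (Polynomial.bernoulli m) = 0 := by
  rw [bern_eq_C_mul_deriv, intl_C_mul, intl_derivative, bernoulli_eval_one, bernoulli_eval_zero,
    bernoulli_eq_bernoulli'_of_ne_one (by omega)]
  simp

lemma bernoulli_eval_one_eq (m : ℕ) (hm : m ≠ 1) :
    (Polynomial.bernoulli m).eval 1 = _root_.bernoulli m := by
  rw [bernoulli_eval_one, bernoulli_eq_bernoulli'_of_ne_one hm]

lemma intl_bern_mul_bern (b : ℕ) : ∀ a : ℕ,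
    intl (Polynomial.bernoulli (a + 1) * Polynomial.bernoulli (b + 1)) =
      (-1) ^ b * ((a + 1)! : ℚ) * ((b + 1)! : ℚ) / (((a + b + 2)!) : ℚ)
        * _root_.bernoulli (a + b + 2) := by
  induction b with
  | zero =>
    intro a
    have h1 : Polynomial.bernoulli (a + 1) * Polynomial.bernoulli 1
        = C (1 / (((a + 1 : ℕ) : ℚ) + 1)) *
          (derivative (Polynomial.bernoulli (a + 1 + 1)) * Polynomial.bernoulli 1) := by
      rw [← mul_assoc, ← bern_eq_C_mul_deriv]
    rw [h1, intl_C_mul, intl_ibp]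
    have hd1 : derivative (Polynomial.bernoulli 1) = 1 := by
      rw [derivative_bernoulli 1]; simp
    rw [hd1, mul_one, intl_bernoulli (a + 1 + 1) (by omega)]
    rw [eval_mul, eval_mul, bernoulli_eval_one_eq (a + 1 + 1) (by omega), bernoulli_eval_one,
      bernoulli'_one]
    simp only [bernoulli_eval_zero, _root_.bernoulli_one]
    have hf : (((a + 0 + 2)!) : ℚ) = ((a : ℚ) + 2) * (((a + 1)!) : ℚ) := by
      rw [show a + 0 + 2 = (a + 1) + 1 from by omega, Nat.factorial_succ]
      push_cast; ring
    have hfn : (((a + 1)!) : ℚ) ≠ 0 := Nat.cast_ne_zero.mpr (Nat.factorial_ne_zero _)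
    rw [show a + 1 + 1 = a + 0 + 2 from by omega, hf]
    push_cast
    have ha : (a : ℚ) + 2 ≠ 0 := by positivity
    field_simp
    ring
  | succ b ih =>
    intro a
    have h1 : Polynomial.bernoulli (a + 1) * Polynomial.bernoulli (b + 1 + 1)
        = C (1 / (((a + 1 : ℕ) : ℚ) + 1)) *
          (derivative (Polynomial.bernoulli (a + 1 + 1)) * Polynomial.bernoulli (b + 1 + 1)) := by
      rw [← mul_assoc, ← bern_eq_C_mul_deriv]
    rw [h1, intl_C_mul, intl_ibp]
    have hd : derivative (Polynomial.bernoulli (b + 1 + 1)) =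
        C (((b + 1 : ℕ) : ℚ) + 1) * Polynomial.bernoulli (b + 1) := by
      rw [derivative_bernoulli_add_one]
      rw [show ((b + 1 : ℕ) : ℚ[X]) + 1 = C (((b + 1 : ℕ) : ℚ) + 1) from by
        rw [C_add, C_1, C_eq_natCast]]
    rw [hd]
    have h2 : Polynomial.bernoulli (a + 1 + 1) *
          (C (((b + 1 : ℕ) : ℚ) + 1) * Polynomial.bernoulli (b + 1))
        = C (((b + 1 : ℕ) : ℚ) + 1) *
          (Polynomial.bernoulli (a + 1 + 1) * Polynomial.bernoulli (b + 1)) := by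
      ring
    rw [h2, intl_C_mul, ih (a + 1)]
    rw [eval_mul, eval_mul, bernoulli_eval_one_eq (a + 1 + 1) (by omega),
      bernoulli_eval_one_eq (b + 1 + 1) (by omega)]
    simp only [bernoulli_eval_zero]
    have hf2 : (((a + 1 + 1)!) : ℚ) = ((a : ℚ) + 2) * (((a + 1)!) : ℚ) := by
      rw [show a + 1 + 1 = (a + 1) + 1 from rfl, Nat.factorial_succ]; push_cast; ring
    have hf3 : (((b + 1 + 1)!) : ℚ) = ((b : ℚ) + 2) * (((b + 1)!) : ℚ) := by
      rw [show b + 1 + 1 = (b + 1) + 1 from rfl, Nat.factorial_succ]; push_cast; ring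
    have hfn : (((a + (b + 1) + 2)!) : ℚ) ≠ 0 := Nat.cast_ne_zero.mpr (Nat.factorial_ne_zero _)
    have hfa : (((a + 1)!) : ℚ) ≠ 0 := Nat.cast_ne_zero.mpr (Nat.factorial_ne_zero _)
    rw [show a + 1 + b + 2 = a + (b + 1) + 2 from by omega, hf2, hf3]
    push_cast
    have ha : (a : ℚ) + 2 ≠ 0 := by positivity
    field_simp
    ring

lemma intl_X_pow_mul (b : ℕ) : ∀ a : ℕ,
    intl (X ^ a * (X - 1) ^ b) = (-1) ^ b * ((a)! : ℚ) * ((b)! : ℚ) / (((a + b + 1)!) : ℚ) := by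
  induction b with
  | zero =>
    intro a
    simp only [pow_zero, mul_one, intl_X_pow]
    rw [show a + 0 + 1 = a + 1 from by omega, Nat.factorial_succ]
    have h : ((a)! : ℚ) ≠ 0 := Nat.cast_ne_zero.mpr (Nat.factorial_ne_zero _)
    push_cast
    field_simp
    simp
  | succ b ih =>
    intro a
    have hX : (X ^ a : ℚ[X]) = C (1 / ((a : ℚ) + 1)) * derivative (X ^ (a + 1)) := by
      rw [derivative_X_pow]
      have : ((a + 1 : ℕ) : ℚ) = (a : ℚ) + 1 := by push_cast; ring
      rw [Nat.add_sub_cancel, ← mul_assoc, ← C_mul, this]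
      have ha : (a : ℚ) + 1 ≠ 0 := by positivity
      rw [one_div, inv_mul_cancel₀ ha]; simp
    rw [hX, mul_assoc, intl_C_mul, intl_ibp]
    have hd : derivative ((X - 1 : ℚ[X]) ^ (b + 1)) = C ((b : ℚ) + 1) * (X - 1) ^ b := by
      rw [derivative_pow]
      simp only [derivative_sub, derivative_X, derivative_one, sub_zero, mul_one,
        Nat.add_sub_cancel]
      congr 1
      push_cast [← C_eq_natCast]
      simp
    rw [hd]
    have h2 : (X ^ (a + 1) : ℚ[X]) * (C ((b : ℚ) + 1) * (X - 1) ^ b)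
        = C ((b : ℚ) + 1) * (X ^ (a + 1) * (X - 1) ^ b) := by ring
    rw [h2, intl_C_mul, ih (a + 1)]
    simp only [eval_mul, eval_pow, eval_sub, eval_X, eval_one, one_pow, sub_self, eval_zero]
    rw [zero_pow (by omega : a + 1 ≠ 0), zero_pow (by omega : b + 1 ≠ 0)]
    rw [show a + 1 + b + 1 = a + (b + 1) + 1 from by omega]
    have hf1 : (((a + 1)!) : ℚ) = ((a : ℚ) + 1) * ((a)! : ℚ) := by
      rw [Nat.factorial_succ]; push_cast; ring
    have hf2 : (((b + 1)!) : ℚ) = ((b : ℚ) + 1) * ((b)! : ℚ) := by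
      rw [Nat.factorial_succ]; push_cast; ring
    have hfn : (((a + (b + 1) + 1)!) : ℚ) ≠ 0 := Nat.cast_ne_zero.mpr (Nat.factorial_ne_zero _)
    have ha : (a : ℚ) + 1 ≠ 0 := by positivity
    rw [hf1, hf2]
    push_cast
    field_simp
    ring

lemma geom_sum_poly (m : ℕ) :
    ∑ i ∈ range (m + 1), (X : ℚ[X]) ^ i * (X - 1) ^ (m - i)
      = X ^ (m + 1) - (X - 1) ^ (m + 1) := by
  have h := geom_sum₂_mul (X : ℚ[X]) (X - 1) (m + 1)
  simp only [sub_sub_cancel, mul_one] at h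
  rw [← h]
  exact Finset.sum_congr rfl fun i hi => by rw [Nat.add_sub_cancel]

lemma intl_sub (p q : ℚ[X]) : intl (p - q) = intl p - intl q := by
  have := intl_add (p - q) q
  simp at this
  linarith

lemma intl_one_sub_pow (m : ℕ) : intl ((X - 1 : ℚ[X]) ^ m) = (-1) ^ m / (m + 1) := by
  have h := intl_X_pow_mul m 0
  simp only [pow_zero, one_mul, Nat.factorial_zero, Nat.cast_one, mul_one, zero_add] at h
  rw [h, Nat.factorial_succ]
  have hf : ((m)! : ℚ) ≠ 0 := Nat.cast_ne_zero.mpr (Nat.factorial_ne_zero _)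
  push_cast
  field_simp

noncomputable def Q (m : ℕ) : ℚ[X] :=
  C (((m : ℚ) + 1) / 2) * ∑ i ∈ range m,
      C (1 / (((i : ℚ) + 1) * ((m - i : ℕ) : ℚ))) *
        (Polynomial.bernoulli (i + 1) * Polynomial.bernoulli (m - i))
  - (∑ i ∈ range (m + 1),
      C (((m + 1).choose (i + 1) : ℚ) * (_root_.bernoulli (i + 1) / ((i : ℚ) + 1))) *
        Polynomial.bernoulli (m - i))
  - C (((m : ℚ) + 1) / 2) * Polynomial.bernoulli m
  - C (harmonic m) * Polynomial.bernoulli (m + 1)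


lemma deriv_bern (k : ℕ) :
    derivative (Polynomial.bernoulli (k + 1)) = C ((k : ℚ) + 1) * Polynomial.bernoulli k := by
  rw [derivative_bernoulli_add_one]
  rw [show ((k : ℕ) : ℚ[X]) + 1 = C ((k : ℚ) + 1) from by rw [C_add, C_1, C_eq_natCast]]

lemma cast_sub_succ {m i : ℕ} (h : i < m) :
    ((m - (i + 1) : ℕ) : ℚ) + 1 = ((m - i : ℕ) : ℚ) := by
  have h : m - (i + 1) + 1 = m - i := by omega
  exact_mod_cast h

lemma D1 (m : ℕ) :
    derivative (∑ i ∈ range (m + 1),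
      C (1 / (((i : ℚ) + 1) * ((m + 1 - i : ℕ) : ℚ))) *
        (Polynomial.bernoulli (i + 1) * Polynomial.bernoulli (m + 1 - i)))
    = C (2 / ((m : ℚ) + 1)) * Polynomial.bernoulli (m + 1)
      + C ((m : ℚ) + 1) * ∑ i ∈ range m,
          C (1 / (((i : ℚ) + 1) * ((m - i : ℕ) : ℚ))) *
            (Polynomial.bernoulli (i + 1) * Polynomial.bernoulli (m - i)) := by
  rw [derivative_sum]
  have step : ∀ i ∈ range (m + 1),
      derivative (C (1 / (((i : ℚ) + 1) * ((m + 1 - i : ℕ) : ℚ))) *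
        (Polynomial.bernoulli (i + 1) * Polynomial.bernoulli (m + 1 - i)))
      = C (1 / ((m + 1 - i : ℕ) : ℚ)) *
          (Polynomial.bernoulli i * Polynomial.bernoulli (m + 1 - i))
        + C (1 / ((i : ℚ) + 1)) *
          (Polynomial.bernoulli (i + 1) * Polynomial.bernoulli (m - i)) := by
    intro i hi
    have him : i ≤ m := by simpa [Nat.lt_succ_iff] using hi
    have hmi : m + 1 - i = (m - i) + 1 := by omega
    rw [hmi, derivative_C_mul, derivative_mul, deriv_bern i, deriv_bern (m - i)]
    have hcast : (((m - i) + 1 : ℕ) : ℚ) = ((m - i : ℕ) : ℚ) + 1 := by push_cast; ring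
    rw [hcast]
    set u : ℚ := (i : ℚ) + 1 with hu
    set v : ℚ := ((m - i : ℕ) : ℚ) + 1 with hv
    have hu0 : u ≠ 0 := by positivity
    have hv0 : v ≠ 0 := by positivity
    have expand : C (1 / (u * v)) *
        (C u * Polynomial.bernoulli i * Polynomial.bernoulli (m - i + 1)
          + Polynomial.bernoulli (i + 1) * (C v * Polynomial.bernoulli (m - i)))
        = C (1 / (u * v) * u) *
            (Polynomial.bernoulli i * Polynomial.bernoulli (m - i + 1))
          + C (1 / (u * v) * v) *
            (Polynomial.bernoulli (i + 1) * Polynomial.bernoulli (m - i)) := by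
      rw [C_mul, C_mul]; ring
    rw [expand]
    congr 2 <;> field_simp <;> ring
  rw [Finset.sum_congr rfl step, Finset.sum_add_distrib]
  -- first sum: peel off i = 0
  rw [Finset.sum_range_succ']
  -- second sum: peel off i = m
  rw [Finset.sum_range_succ]
  have e1 : ∀ i ∈ range m,
      C (1 / ((m + 1 - (i + 1) : ℕ) : ℚ)) *
        (Polynomial.bernoulli (i + 1) * Polynomial.bernoulli (m + 1 - (i + 1)))
      = C (1 / ((m - i : ℕ) : ℚ)) *
        (Polynomial.bernoulli (i + 1) * Polynomial.bernoulli (m - i)) := by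
    intro i hi
    congr 2 <;> [skip; skip] <;> rw [show m + 1 - (i + 1) = m - i from by omega]
  rw [Finset.sum_congr rfl e1]
  have e0 : C (1 / ((m + 1 - 0 : ℕ) : ℚ)) *
      (Polynomial.bernoulli 0 * Polynomial.bernoulli (m + 1 - 0))
      = C (1 / ((m : ℚ) + 1)) * Polynomial.bernoulli (m + 1) := by
    rw [show m + 1 - 0 = m + 1 from rfl, Polynomial.bernoulli_zero, one_mul]
    push_cast; ring_nf
  have em : C (1 / ((m : ℚ) + 1)) *
      (Polynomial.bernoulli (m + 1) * Polynomial.bernoulli (m - m))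
      = C (1 / ((m : ℚ) + 1)) * Polynomial.bernoulli (m + 1) := by
    rw [Nat.sub_self, Polynomial.bernoulli_zero, mul_one]
  rw [e0, em]
  have ecomb : ∀ i ∈ range m,
      C (1 / ((m - i : ℕ) : ℚ)) *
          (Polynomial.bernoulli (i + 1) * Polynomial.bernoulli (m - i))
        + C (1 / ((i : ℚ) + 1)) *
          (Polynomial.bernoulli (i + 1) * Polynomial.bernoulli (m - i))
      = C ((m : ℚ) + 1) * (C (1 / (((i : ℚ) + 1) * ((m - i : ℕ) : ℚ))) *
          (Polynomial.bernoulli (i + 1) * Polynomial.bernoulli (m - i))) := by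
    intro i hi
    have him : i < m := Finset.mem_range.mp hi
    have h1 : ((m - i : ℕ) : ℚ) ≠ 0 := by
      have : (0 : ℕ) < m - i := by omega
      positivity
    have h2 : (i : ℚ) + 1 ≠ 0 := by positivity
    have hmi : ((m - i : ℕ) : ℚ) = (m : ℚ) - i := by
      rw [Nat.cast_sub (le_of_lt him)]
    rw [← add_mul, ← C_add]
    conv_rhs => rw [← mul_assoc, ← C_mul]
    congr 1
    rw [hmi] at h1 ⊢
    field_simp
    ring
  rw [Finset.mul_sum, ← Finset.sum_congr rfl ecomb, Finset.sum_add_distrib]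
  have h2 : C (2 / ((m : ℚ) + 1)) = C (1 / ((m : ℚ) + 1)) + C (1 / ((m : ℚ) + 1)) := by
    rw [← C_add]; congr 1; ring
  rw [h2]
  ring

lemma D2 (m : ℕ) :
    derivative (∑ i ∈ range (m + 2),
      C (((m + 2).choose (i + 1) : ℚ) * (_root_.bernoulli (i + 1) / ((i : ℚ) + 1))) *
        Polynomial.bernoulli (m + 1 - i))
    = C ((m : ℚ) + 2) * ∑ i ∈ range (m + 1),
        C (((m + 1).choose (i + 1) : ℚ) * (_root_.bernoulli (i + 1) / ((i : ℚ) + 1))) *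
          Polynomial.bernoulli (m - i) := by
  rw [derivative_sum, Finset.sum_range_succ]
  have hlast : derivative (C (((m + 2).choose (m + 1 + 1) : ℚ) *
      (_root_.bernoulli (m + 1 + 1) / ((m + 1 : ℕ) : ℚ) + 1)) *
        Polynomial.bernoulli (m + 1 - (m + 1))) = 0 := by
    rw [show m + 1 - (m + 1) = 0 from by omega, Polynomial.bernoulli_zero, mul_one, derivative_C]
  have hlast' : derivative (C (((m + 2).choose (m + 1 + 1) : ℚ) *
      (_root_.bernoulli (m + 1 + 1) / (((m + 1 : ℕ) : ℚ) + 1))) *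
        Polynomial.bernoulli (m + 1 - (m + 1))) = 0 := by
    rw [show m + 1 - (m + 1) = 0 from by omega, Polynomial.bernoulli_zero, mul_one, derivative_C]
  rw [hlast', add_zero]
  rw [Finset.mul_sum]
  refine Finset.sum_congr rfl fun i hi => ?_
  have him : i ≤ m := by
    have := Finset.mem_range.mp hi; omega
  rw [show m + 1 - i = (m - i) + 1 from by omega, derivative_C_mul, deriv_bern (m - i)]
  rw [← mul_assoc, ← C_mul]
  conv_rhs => rw [← mul_assoc, ← C_mul]
  congr 1
  have hcast : ((m - i : ℕ) : ℚ) + 1 = ((m : ℚ) + 1) - i := by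
    rw [Nat.cast_sub him]; ring
  rw [hcast]
  -- choose identity: (m+2).choose (i+1) * (m+1-i) = (m+2) * (m+1).choose (i+1)
  have hch : ((m + 2).choose (i + 1) : ℚ) * (((m : ℚ) + 1) - i)
      = ((m : ℚ) + 2) * ((m + 1).choose (i + 1) : ℚ) := by
    have hnat : (m + 2).choose (i + 1) * (m + 1 - i) = (m + 2) * (m + 1).choose (i + 1) := by
      have h1 := Nat.choose_succ_right_eq (m + 2) (i + 1)
      have h2 := Nat.add_one_mul_choose_eq (m + 1) (i + 1)
      -- h1 : (m+2).choose (i+2) * (i+2) = (m+2).choose (i+1) * ((m+2) - (i+1))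
      -- h2 : (m+2) * (m+1).choose (i+1) = (m+2).choose (i+2) * (i+2)
      rw [show m + 2 - (i + 1) = m + 1 - i from by omega] at h1
      rw [h1] at h2
      simpa [Nat.succ_eq_add_one] using h2.symm
    have := congrArg (fun k : ℕ => (k : ℚ)) hnat
    push_cast at this
    rw [Nat.cast_sub (by omega : i ≤ m + 1)] at this
    push_cast at this
    convert this using 2 <;> push_cast <;> ring
  have hi1 : (i : ℚ) + 1 ≠ 0 := by positivity
  field_simp
  congr 1
  linear_combination _root_.bernoulli (i + 1) / ((i : ℚ) + 1) * hch

lemma intl_Q (m : ℕ) : intl (Q (m + 1)) = 0 := by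
  have key : ∀ i ∈ range (m + 1),
      intl (C (1 / (((i : ℚ) + 1) * ((m + 1 - i : ℕ) : ℚ))) *
        (Polynomial.bernoulli (i + 1) * Polynomial.bernoulli (m + 1 - i)))
      = (_root_.bernoulli (m + 2) / ((m : ℚ) + 2)) * intl (X ^ i * (X - 1) ^ (m - i)) := by
    intro i hi
    have him : i ≤ m := by simpa [Nat.lt_succ_iff] using hi
    rw [intl_C_mul, show m + 1 - i = (m - i) + 1 from by omega,
      intl_bern_mul_bern (m - i) i, intl_X_pow_mul (m - i) i,
      show i + (m - i) + 2 = m + 2 from by omega, show i + (m - i) + 1 = m + 1 from by omega]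
    have hc1 : (((m - i) + 1 : ℕ) : ℚ) = ((m : ℚ) + 1) - (i : ℚ) := by
      push_cast [Nat.cast_sub him]; ring
    have hf1 : (((i + 1)!) : ℚ) = ((i : ℚ) + 1) * ((i)! : ℚ) := by
      rw [Nat.factorial_succ]; push_cast; ring
    have hf2 : ((((m - i) + 1)!) : ℚ) = (((m : ℚ) + 1) - i) * (((m - i))! : ℚ) := by
      rw [Nat.factorial_succ, ← hc1]; push_cast; ring
    have hf3 : (((m + 2)!) : ℚ) = ((m : ℚ) + 2) * (((m + 1)!) : ℚ) := by
      rw [show m + 2 = (m + 1) + 1 from rfl, Nat.factorial_succ]; push_cast; ring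
    rw [hc1, hf1, hf2, hf3]
    have h1 : (i : ℚ) + 1 ≠ 0 := by positivity
    have h2 : ((m : ℚ) + 1) - i ≠ 0 := by
      have : (i : ℚ) ≤ (m : ℚ) := by exact_mod_cast him
      intro h; nlinarith
    have h3 : (((m + 1)!) : ℚ) ≠ 0 := Nat.cast_ne_zero.mpr (Nat.factorial_ne_zero _)
    have h4 : (m : ℚ) + 2 ≠ 0 := by positivity
    field_simp
  unfold Q
  rw [intl_sub, intl_sub, intl_sub, intl_C_mul, intl_C_mul, intl_C_mul,
    intl_sum, intl_sum, Finset.sum_congr rfl key,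
    intl_bernoulli (m + 1) (by omega), intl_bernoulli (m + 2) (by omega)]
  rw [← Finset.mul_sum, ← intl_sum, geom_sum_poly, intl_sub, intl_X_pow, intl_one_sub_pow]
  have hsum2 : ∑ i ∈ range (m + 1 + 1),
      intl (C (((m + 1 + 1).choose (i + 1) : ℚ) * (_root_.bernoulli (i + 1) / ((i : ℚ) + 1))) *
        Polynomial.bernoulli (m + 1 - i))
      = _root_.bernoulli (m + 2) / ((m : ℚ) + 2) := by
    rw [Finset.sum_eq_single (m + 1)]
    · rw [show m + 1 - (m + 1) = 0 from by omega, intl_C_mul]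
      have : intl (Polynomial.bernoulli 0) = 1 := by
        rw [Polynomial.bernoulli_zero, ← C_1, intl_C]
      rw [this, Nat.choose_self]
      push_cast; ring
    · intro i hi hne
      have him : i ≤ m := by
        have := Finset.mem_range.mp hi; omega
      rw [intl_C_mul, intl_bernoulli (m + 1 - i) (by omega), mul_zero]
    · intro h; exact absurd (Finset.mem_range.mpr (by omega)) h
  rw [hsum2]
  rcases Nat.even_or_odd m with he | ho
  · obtain ⟨k, hk⟩ := he
    have h1 : ((-1 : ℚ)) ^ (m + 1) = -1 := by
      rw [hk]; rw [show k + k + 1 = 2 * k + 1 from by omega, pow_succ, pow_mul]; norm_num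
    rw [h1]
    push_cast
    have h4 : (m : ℚ) + 2 ≠ 0 := by positivity
    field_simp
    ring
  · have hb : _root_.bernoulli (m + 2) = 0 := by
      rw [bernoulli_eq_bernoulli'_of_ne_one (by omega)]
      exact bernoulli'_eq_zero_of_odd (by simpa using ho.add_even (even_two)) (by omega)
    rw [hb]
    ring

lemma Qder (m : ℕ) : derivative (Q (m + 1)) = C ((m : ℚ) + 2) * Q m := by
  unfold Q
  rw [derivative_sub, derivative_sub, derivative_sub, derivative_C_mul, derivative_C_mul,
    derivative_C_mul]
  have hc1 : ((m + 1 : ℕ) : ℚ) + 1 = (m : ℚ) + 2 := by push_cast; ring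
  rw [show (((m + 1 : ℕ) : ℚ) + 1) / 2 = ((m : ℚ) + 2) / 2 from by rw [hc1]]
  rw [show m + 1 + 1 = m + 2 from rfl]
  rw [D1 m, D2 m, deriv_bern m, deriv_bern (m + 1), hc1]
  rw [harmonic_succ]
  have hm1 : (m : ℚ) + 1 ≠ 0 := by positivity
  have e1 : C (((m : ℚ) + 2) / 2) * (C (2 / ((m : ℚ) + 1)) * Polynomial.bernoulli (m + 1))
      = C (((m : ℚ) + 2) / ((m : ℚ) + 1)) * Polynomial.bernoulli (m + 1) := by
    rw [← mul_assoc, ← C_mul]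
    congr 1
    field_simp
  have e3 : ∀ p : ℚ[X], C (((m : ℚ) + 2) / 2) * (C ((m : ℚ) + 1) * p)
      = C ((m : ℚ) + 2) * (C (((m : ℚ) + 1) / 2) * p) := by
    intro p
    rw [← mul_assoc, ← C_mul]
    conv_rhs => rw [← mul_assoc, ← C_mul]
    congr 1
    ring
  have e4 : C (harmonic m + ((m + 1 : ℕ) : ℚ)⁻¹) * (C ((m : ℚ) + 2) * Polynomial.bernoulli (m + 1))
      = C ((m : ℚ) + 2) * (C (harmonic m) * Polynomial.bernoulli (m + 1))
        + C (((m : ℚ) + 2) / ((m : ℚ) + 1)) * Polynomial.bernoulli (m + 1) := by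
    rw [← mul_assoc, ← C_mul]
    conv_rhs => rw [← mul_assoc, ← C_mul]
    rw [← add_mul, ← C_add]
    congr 1
    push_cast
    field_simp
  rw [mul_add, e1, e3, e3, e4]
  ring

lemma Q_zero : Q 0 = 0 := by
  unfold Q
  simp [_root_.bernoulli_one]
  rw [show (-1 / 2 : ℚ) = -(1 / 2) from by norm_num, map_neg, neg_neg,
    show (1 / 2 : ℚ) = 2⁻¹ from by norm_num, sub_self]

lemma Q_eq_zero (m : ℕ) : Q m = 0 := by
  induction m with
  | zero => exact Q_zero
  | succ m ih =>
    have hd : derivative (Q (m + 1)) = 0 := by rw [Qder, ih, mul_zero]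
    have hC := Polynomial.eq_C_of_derivative_eq_zero hd
    have : (Q (m + 1)).coeff 0 = 0 := by
      have := intl_Q m
      rw [hC, intl_C] at this
      simpa using this
    rw [hC, this, map_zero]

theorem gessel_miki_poly (n : ℕ) (hn : 1 ≤ n) (x : ℚ) :
    ((n : ℚ) / 2) * ∑ l ∈ Finset.Icc 1 (n - 1),
        ((Polynomial.bernoulli l).eval x / l) * ((Polynomial.bernoulli (n - l)).eval x / ((n : ℚ) - l))
      = (∑ l ∈ Finset.Icc 1 n,
          (n.choose l : ℚ) * (_root_.bernoulli l / l) * (Polynomial.bernoulli (n - l)).eval x)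
        + ((n : ℚ) / 2) * (Polynomial.bernoulli (n - 1)).eval x
        + harmonic (n - 1) * (Polynomial.bernoulli n).eval x := by
  obtain ⟨m, rfl⟩ : ∃ m, n = m + 1 := ⟨n - 1, by omega⟩
  have hQ : (Q m).eval x = 0 := by rw [Q_eq_zero]; simp
  unfold Q at hQ
  simp only [eval_sub, eval_mul, eval_C, eval_finset_sum] at hQ
  -- convert Icc sums in the goal to range sums
  rw [show m + 1 - 1 = m from rfl]
  rw [show Finset.Icc 1 m = Finset.Ico 1 (m + 1) from by rw [Finset.Ico_add_one_right_eq_Icc],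
    Finset.sum_Ico_eq_sum_range,
    show Finset.Icc 1 (m + 1) = Finset.Ico 1 (m + 2) from by exact (Finset.Ico_add_one_right_eq_Icc 1 (m + 1)).symm,
    Finset.sum_Ico_eq_sum_range]
  rw [show m + 1 - 1 = m from rfl, show m + 2 - 1 = m + 1 from rfl]
  have e1 : ∀ i ∈ range m,
      (Polynomial.bernoulli (1 + i)).eval x / ((1 + i : ℕ) : ℚ) *
        ((Polynomial.bernoulli (m + 1 - (1 + i))).eval x / (((m + 1 : ℕ) : ℚ) - ((1 + i : ℕ) : ℚ)))
      = 1 / (((i : ℚ) + 1) * ((m - i : ℕ) : ℚ)) *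
          ((Polynomial.bernoulli (i + 1)).eval x * (Polynomial.bernoulli (m - i)).eval x) := by
    intro i hi
    have him : i < m := Finset.mem_range.mp hi
    rw [show m + 1 - (1 + i) = m - i from by omega, show 1 + i = i + 1 from by omega]
    have hc : ((m + 1 : ℕ) : ℚ) - ((i + 1 : ℕ) : ℚ) = ((m - i : ℕ) : ℚ) := by
      rw [Nat.cast_sub (le_of_lt him)]; push_cast; ring
    rw [hc]
    have h1 : ((i : ℕ) : ℚ) + 1 ≠ 0 := by positivity
    have h2 : ((m - i : ℕ) : ℚ) ≠ 0 := by
      have : (0 : ℕ) < m - i := by omega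
      positivity
    push_cast
    field_simp
  have e2 : ∀ i ∈ range (m + 1),
      ((m + 1).choose (1 + i) : ℚ) * (_root_.bernoulli (1 + i) / ((1 + i : ℕ) : ℚ)) *
        (Polynomial.bernoulli (m + 1 - (1 + i))).eval x
      = ((m + 1).choose (i + 1) : ℚ) * (_root_.bernoulli (i + 1) / ((i : ℚ) + 1)) *
        (Polynomial.bernoulli (m - i)).eval x := by
    intro i hi
    rw [show m + 1 - (1 + i) = m - i from by omega, show 1 + i = i + 1 from by omega]
    push_cast
    ring
  rw [Finset.sum_congr rfl e1, Finset.sum_congr rfl e2]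
  push_cast
  push_cast at hQ
  linarith
end

section
/- For integers n ≥ 1: ∑_{l=0}^{n-1} B_l(x)·B_{n-l}(x)/(n-l) = ∑_{l=1}^{n} C(n,l) (B_l/l) B_{n-l}(x) + (n/2) B_{n-1}(x) + H_n B_n(x), where H_n is the n-th harmonic number. -/
/-!
Write `L n` and `R n` for the two sides, as polynomials in `x`. Since `B_k' = k B_{k-1}`, both
satisfy `L (n+1)' = (n+1) L n + B_n`, and a polynomial is determined by its derivative together with
its integral over `[0, 1]`. Integrating `R (n+1)` only the term `l = n+1` survives, leaving
`B_{n+1}/(n+1)`. For `L (n+1)`, repeated integration by parts gives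
`∫₀¹ B_{a+1} B_b = (-1)^a (a+1)! b! / (a+1+b)! · B_{a+1+b}`, and the resulting alternating sum of
products of factorials telescopes, again to `B_{n+1}/(n+1)`. Induction from `L 1 = R 1 = B_1`.
-/

open Polynomial Finset
open scoped Nat

theorem mul_sum_range_neg_one_pow_mul_factorial_mul_factorial {R : Type*} [CommRing R] (m : ℕ) :
    (m + 2 : R) * ∑ i ∈ range m, (-1) ^ i * ((i + 1)! : R) * (m - 1 - i)! =
      m ! + (-1) ^ (m + 1) * ((m + 1)! : R) := by
  set e : ℕ → R := fun i => (-1) ^ i * ((i + 1)! : R) * (m - i)!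
  have hstep : ∀ i ∈ range m,
      (m + 2 : R) * ((-1) ^ i * ((i + 1)! : R) * (m - 1 - i)!) = e i - e (i + 1) := by
    intro i hi
    obtain ⟨k, rfl⟩ := Nat.exists_eq_add_of_lt (mem_range.mp hi)
    simp only [e, show i + k + 1 - 1 - i = k by omega, show i + k + 1 - i = k + 1 by omega,
      show i + k + 1 - (i + 1) = k by omega, Nat.factorial_succ]
    push_cast
    ring
  rw [mul_sum, sum_congr rfl hstep, sum_range_sub']
  simp only [e, Nat.sub_zero, Nat.sub_self, Nat.factorial_zero]
  push_cast
  ring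

namespace Polynomial

/-- `∫₀¹ p`, computed coefficientwise from `∫₀¹ xⁱ = 1 / (i + 1)`. -/
noncomputable def integral01 : ℚ[X] →ₗ[ℚ] ℚ :=
  lsum fun i => (i + 1 : ℚ)⁻¹ • LinearMap.id

theorem integral01_monomial (i : ℕ) (a : ℚ) : integral01 (monomial i a) = a / (i + 1) := by
  simp [integral01, div_eq_inv_mul]

theorem integral01_C (a : ℚ) : integral01 (C a) = a := by
  simpa using integral01_monomial 0 a

theorem integral01_derivative (p : ℚ[X]) : integral01 (derivative p) = p.eval 1 - p.eval 0 := by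
  induction p using Polynomial.induction_on' with
  | add p q hp hq => rw [derivative_add, map_add, hp, hq, eval_add, eval_add]; ring
  | monomial i a =>
    cases i with
    | zero => simp
    | succ i =>
      rw [derivative_monomial, integral01_monomial]
      simp only [Nat.cast_add, Nat.cast_one, add_tsub_cancel_right, eval_monomial, one_pow, mul_one,
        ne_eq, Nat.add_eq_zero_iff, one_ne_zero, and_false, not_false_eq_true, zero_pow, mul_zero,
        sub_zero]
      field_simp

theorem integral01_mul_derivative (p q : ℚ[X]) :
    integral01 (p * derivative q) =
      p.eval 1 * q.eval 1 - p.eval 0 * q.eval 0 - integral01 (derivative p * q) := by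
  have h := integral01_derivative (p * q)
  rw [derivative_mul, map_add, eval_mul, eval_mul] at h
  linarith

theorem eq_of_derivative_eq_of_integral01_eq {p q : ℚ[X]} (hd : derivative p = derivative q)
    (hi : integral01 p = integral01 q) : p = q := by
  have hC := eq_C_of_derivative_eq_zero (p := p - q) (by rw [derivative_sub, hd, sub_self])
  have h0 : (p - q).coeff 0 = 0 := by
    rw [← integral01_C ((p - q).coeff 0), ← hC, map_sub, hi, sub_self]
  rwa [h0, map_zero, sub_eq_zero] at hC

theorem derivative_bernoulli_eq_smul (k : ℕ) :
    derivative (bernoulli k) = (k : ℚ) • bernoulli (k - 1) := by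
  rw [derivative_bernoulli, smul_eq_C_mul, C_eq_natCast]

theorem bernoulli_eq_smul_derivative (k : ℕ) :
    bernoulli k = (k + 1 : ℚ)⁻¹ • derivative (bernoulli (k + 1)) := by
  rw [derivative_bernoulli_eq_smul, smul_smul, Nat.cast_succ, inv_mul_cancel₀ (by positivity),
    one_smul, Nat.add_sub_cancel]

theorem bernoulli_eval_one_sub_eval_zero (n : ℕ) :
    (bernoulli n).eval 1 - (bernoulli n).eval 0 = n * 0 ^ (n - 1) := by
  have h := bernoulli_eval_one_add n 0
  rw [add_zero] at h
  rw [h, add_sub_cancel_left]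

theorem integral01_bernoulli {k : ℕ} (hk : k ≠ 0) : integral01 (bernoulli k) = 0 := by
  rw [bernoulli_eq_smul_derivative, map_smul, integral01_derivative,
    bernoulli_eval_one_sub_eval_zero, Nat.add_sub_cancel, zero_pow hk, mul_zero, smul_zero]

theorem integral01_bernoulli_succ_mul_bernoulli (a : ℕ) {b : ℕ} (hb : b ≠ 0) :
    integral01 (bernoulli (a + 1) * bernoulli b) =
      (a + 1) / (b + 1) *
        (0 ^ a * _root_.bernoulli (b + 1) - integral01 (bernoulli a * bernoulli (b + 1))) := by
  have hparts := integral01_mul_derivative (bernoulli (a + 1)) (bernoulli (b + 1))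
  have hb1 : (bernoulli (b + 1)).eval 1 = _root_.bernoulli (b + 1) := by
    have h := bernoulli_eval_one_sub_eval_zero (b + 1)
    rwa [Nat.add_sub_cancel, zero_pow hb, mul_zero, sub_eq_zero, bernoulli_eval_zero] at h
  have ha1 := bernoulli_eval_one_sub_eval_zero (a + 1)
  rw [derivative_bernoulli_eq_smul, derivative_bernoulli_eq_smul, Nat.add_sub_cancel,
    Nat.add_sub_cancel, mul_smul_comm, smul_mul_assoc, map_smul, map_smul, smul_eq_mul,
    smul_eq_mul, hb1] at hparts
  simp only [bernoulli_eval_zero] at hparts ha1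
  push_cast at hparts ha1
  field_simp
  linear_combination hparts + _root_.bernoulli (b + 1) * ha1

theorem integral01_bernoulli_mul_bernoulli (a : ℕ) {b : ℕ} (hb : b ≠ 0) :
    integral01 (bernoulli (a + 1) * bernoulli b) =
      (-1) ^ a * (a + 1)! * b ! / (a + 1 + b)! * _root_.bernoulli (a + 1 + b) := by
  induction a generalizing b with
  | zero =>
    rw [integral01_bernoulli_succ_mul_bernoulli 0 hb, bernoulli_zero, one_mul,
      integral01_bernoulli b.succ_ne_zero, show 0 + 1 + b = b + 1 by ring, Nat.factorial_succ b]
    push_cast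
    field_simp
    ring
  | succ a ih =>
    rw [integral01_bernoulli_succ_mul_bernoulli (a + 1) hb, ih b.succ_ne_zero,
      show a + 1 + (b + 1) = a + 1 + 1 + b by ring, Nat.factorial_succ (a + 1),
      Nat.factorial_succ b]
    push_cast
    field_simp
    ring

noncomputable def mikiLeft (n : ℕ) : ℚ[X] :=
  ∑ l ∈ range n, ((n - l : ℕ) : ℚ)⁻¹ • (bernoulli l * bernoulli (n - l))

noncomputable def mikiRight (n : ℕ) : ℚ[X] :=
  (∑ l ∈ Icc 1 n, ((n.choose l : ℚ) * (_root_.bernoulli l / l)) • bernoulli (n - l))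
    + ((n : ℚ) / 2) • bernoulli (n - 1) + (harmonic n : ℚ) • bernoulli n

theorem derivative_mikiLeft_succ (n : ℕ) :
    derivative (mikiLeft (n + 1)) = (n + 1 : ℚ) • mikiLeft n + bernoulli n := by
  set P : ℕ → ℚ[X] := fun l => bernoulli l * bernoulli (n - l)
  have hterm : ∀ l ∈ range (n + 1),
      derivative (((n + 1 - l : ℕ) : ℚ)⁻¹ • (bernoulli l * bernoulli (n + 1 - l))) =
        (((n + 1 - l : ℕ) : ℚ)⁻¹ * l) • (bernoulli (l - 1) * bernoulli (n + 1 - l)) + P l := by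
    intro l hl
    have hl : ((n + 1 - l : ℕ) : ℚ) ≠ 0 := Nat.cast_ne_zero.mpr (by grind)
    rw [derivative_smul, derivative_mul, derivative_bernoulli_eq_smul,
      derivative_bernoulli_eq_smul, show n + 1 - l - 1 = n - l by omega]
    simp only [P, smul_add, smul_mul_assoc, mul_smul_comm, smul_smul, inv_mul_cancel₀ hl, one_smul]
  have hshift : ∀ i ∈ range n,
      (((n + 1 - (i + 1) : ℕ) : ℚ)⁻¹ * (i + 1 : ℕ)) •
          (bernoulli (i + 1 - 1) * bernoulli (n + 1 - (i + 1))) =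
        ((n + 1 : ℚ) • ((n - i : ℕ) : ℚ)⁻¹) • P i - P i := by
    intro i hi
    have hni : (n : ℚ) - i ≠ 0 := sub_ne_zero.mpr (by exact_mod_cast (mem_range.mp hi).ne')
    rw [Nat.add_sub_add_right, Nat.add_sub_cancel, ← one_smul ℚ (P i), smul_smul, ← sub_smul]
    congr 1
    push_cast [Nat.cast_sub (mem_range.mp hi).le, smul_eq_mul]
    field_simp
    ring
  rw [mikiLeft, derivative_sum, sum_congr rfl hterm, sum_add_distrib, sum_range_succ',
    sum_congr rfl hshift, sum_range_succ P, mikiLeft, smul_sum]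
  simp only [P, smul_eq_mul, sum_sub_distrib, tsub_zero, Nat.cast_add, Nat.cast_one,
    CharP.cast_eq_zero, mul_zero, zero_tsub, bernoulli_zero, one_mul, zero_smul, add_zero,
    tsub_self, mul_one, smul_smul]
  abel

theorem derivative_mikiRight_succ (n : ℕ) :
    derivative (mikiRight (n + 1)) = (n + 1 : ℚ) • mikiRight n + bernoulli n := by
  have hterm : ∀ l ∈ Icc 1 (n + 1),
      derivative ((((n + 1).choose l : ℚ) * (_root_.bernoulli l / l)) • bernoulli (n + 1 - l)) =
        (n + 1 : ℚ) • (((n.choose l : ℚ) * (_root_.bernoulli l / l)) • bernoulli (n - l)) := by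
    intro l _
    have hchoose : ((n.choose l * (n + 1) : ℕ) : ℚ) = ((n + 1).choose l * (n + 1 - l) : ℕ) :=
      congrArg _ (Nat.choose_mul_succ_eq n l)
    push_cast at hchoose
    rw [derivative_smul, derivative_bernoulli_eq_smul, smul_smul, smul_smul,
      show n + 1 - l - 1 = n - l by omega]
    congr 1
    linear_combination (_root_.bernoulli l / l) * hchoose.symm
  have hsucc : harmonic (n + 1) = harmonic n + (n + 1 : ℚ)⁻¹ := by
    rw [harmonic_succ]; push_cast; rfl
  rw [mikiRight, mikiRight, derivative_add, derivative_add, derivative_sum, sum_congr rfl hterm,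
    ← smul_sum, sum_Icc_succ_top (by omega), Nat.choose_succ_self, derivative_smul,
    derivative_smul, derivative_bernoulli_eq_smul, derivative_bernoulli_eq_smul, hsucc]
  simp only [smul_add, smul_smul, Nat.add_sub_cancel, Nat.cast_zero, zero_mul, zero_smul, add_zero]
  push_cast
  rw [show (harmonic n + (n + 1 : ℚ)⁻¹) * (n + 1) = (n + 1) * harmonic n + 1 by field_simp]
  module

theorem integral01_mikiRight_succ {m : ℕ} (hm : m ≠ 0) :
    integral01 (mikiRight (m + 1)) = _root_.bernoulli (m + 1) / (m + 1) := by
  have hterm : ∀ l ∈ Icc 1 m,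
      integral01 ((((m + 1).choose l : ℚ) * (_root_.bernoulli l / l)) • bernoulli (m + 1 - l)) =
        0 := by
    intro l hl
    rw [map_smul, integral01_bernoulli (by grind), smul_zero]
  rw [mikiRight, map_add, map_add, map_sum, sum_Icc_succ_top (by omega), sum_congr rfl hterm,
    map_smul, map_smul, map_smul, Nat.sub_self, Nat.add_sub_cancel, integral01_bernoulli hm,
    integral01_bernoulli m.succ_ne_zero, bernoulli_zero, ← C_1, integral01_C]
  simp

theorem integral01_mikiLeft_succ {m : ℕ} (hm : m ≠ 0) :
    integral01 (mikiLeft (m + 1)) = _root_.bernoulli (m + 1) / (m + 1) := by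
  have hterm : ∀ i ∈ range m,
      ((m + 1 - (i + 1) : ℕ) : ℚ)⁻¹ *
          integral01 (bernoulli (i + 1) * bernoulli (m + 1 - (i + 1))) =
        (-1) ^ i * (i + 1)! * (m - 1 - i)! * (_root_.bernoulli (m + 1) / (m + 1)!) := by
    intro i hi
    obtain ⟨k, rfl⟩ := Nat.exists_eq_add_of_lt (mem_range.mp hi)
    rw [Nat.add_sub_add_right, integral01_bernoulli_mul_bernoulli i (by omega),
      show i + 1 + (i + k + 1 - i) = i + k + 1 + 1 by omega, show i + k + 1 - i = k + 1 by omega,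
      show i + k + 1 - 1 - i = k by omega, Nat.factorial_succ k]
    push_cast
    field_simp
  simp only [mikiLeft, map_sum, map_smul, smul_eq_mul]
  rw [sum_range_succ', sum_congr rfl hterm, ← sum_mul, bernoulli_zero, one_mul, Nat.sub_zero,
    integral01_bernoulli m.succ_ne_zero, mul_zero, add_zero]
  rcases Nat.even_or_odd m with hev | hodd
  · rw [bernoulli_eq_zero_of_odd hev.add_one (by omega)]
    simp
  · have htel := mul_sum_range_neg_one_pow_mul_factorial_mul_factorial (R := ℚ) m
    rw [hodd.add_one.neg_one_pow, Nat.factorial_succ] at htel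
    push_cast at htel
    have hsum : ∑ i ∈ range m, (-1 : ℚ) ^ i * (i + 1)! * (m - 1 - i)! = m ! := by
      apply mul_left_cancel₀ (show (m + 2 : ℚ) ≠ 0 by positivity)
      linear_combination htel
    rw [hsum, Nat.factorial_succ]
    push_cast
    field_simp

theorem mikiLeft_eq_mikiRight {n : ℕ} (hn : n ≠ 0) : mikiLeft n = mikiRight n := by
  induction n with
  | zero => exact absurd rfl hn
  | succ m ih =>
    rcases eq_or_ne m 0 with rfl | hm
    · simp only [mikiLeft, mikiRight, zero_add, range_one, sum_singleton, tsub_zero, Nat.cast_one,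
        inv_one, bernoulli_zero, one_mul, one_smul, Icc_self, Nat.choose_self, _root_.bernoulli_one,
        div_one, tsub_self, one_div, harmonic_succ, harmonic_zero]
      module
    · apply eq_of_derivative_eq_of_integral01_eq
      · rw [derivative_mikiLeft_succ, derivative_mikiRight_succ, ih hm]
      · rw [integral01_mikiLeft_succ hm, integral01_mikiRight_succ hm]

end Polynomial

theorem miki_poly_asymmetric (n : ℕ) (hn : 1 ≤ n) (x : ℚ) :
    ∑ l ∈ Finset.range n,
        (Polynomial.bernoulli l).eval x * ((Polynomial.bernoulli (n - l)).eval x / ((n : ℚ) - l))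
      = (∑ l ∈ Finset.Icc 1 n,
          (n.choose l : ℚ) * (_root_.bernoulli l / l) * (Polynomial.bernoulli (n - l)).eval x)
        + ((n : ℚ) / 2) * (Polynomial.bernoulli (n - 1)).eval x
        + harmonic n * (Polynomial.bernoulli n).eval x := by
  convert congrArg (eval x) (mikiLeft_eq_mikiRight (n := n) (by omega)) using 1
  · simp only [mikiLeft, eval_finsetSum, eval_smul, eval_mul, smul_eq_mul]
    refine sum_congr rfl fun l hl => ?_
    rw [Nat.cast_sub (mem_range.mp hl).le]
    ring
  · simp only [mikiRight, eval_finsetSum, eval_add, eval_smul, smul_eq_mul, mul_assoc]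
end

section
/- For integers n ≥ 1: ∑_{l=0}^{n} C(n,l) B_l B_{n-l}(x) = n(x-1) B_{n-1}(x) - (n-1) B_n(x), as an identity of polynomials in x. -/
open PowerSeries

lemma deriv_exp_rat : d⁄dX ℚ (PowerSeries.exp ℚ) = PowerSeries.exp ℚ := by
  ext n
  rw [PowerSeries.coeff_derivative, PowerSeries.coeff_exp, PowerSeries.coeff_exp]
  simp [Nat.factorial_succ]
  field_simp

lemma key_ps : bernoulliPowerSeries ℚ * bernoulliPowerSeries ℚ =
    bernoulliPowerSeries ℚ - X * (d⁄dX ℚ (bernoulliPowerSeries ℚ))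
      - X * bernoulliPowerSeries ℚ := by
  set A := bernoulliPowerSeries ℚ with hA
  have h1 : A * (PowerSeries.exp ℚ - 1) = X := bernoulliPowerSeries_mul_exp_sub_one ℚ
  have h2 : A * PowerSeries.exp ℚ + (PowerSeries.exp ℚ - 1) * (d⁄dX ℚ A) = 1 := by
    have h := congrArg (d⁄dX ℚ) h1
    rw [PowerSeries.derivative_X, Derivation.leibniz] at h
    rw [map_sub, Derivation.map_one_eq_zero, deriv_exp_rat, sub_zero, smul_eq_mul,
      smul_eq_mul] at h
    exact h
  linear_combination A * h2 - (A + d⁄dX ℚ A) * h1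

lemma coeff_bps (k : ℕ) : PowerSeries.coeff k (bernoulliPowerSeries ℚ) =
    _root_.bernoulli k / k.factorial := by
  simp [bernoulliPowerSeries]

lemma quad_bernoulli (m : ℕ) :
    ∑ l ∈ Finset.range (m + 2), ((m+1).choose l : ℚ) * _root_.bernoulli l
        * _root_.bernoulli (m + 1 - l)
      = -((m : ℚ)) * _root_.bernoulli (m+1) - ((m : ℚ)+1) * _root_.bernoulli m := by
  have hc := congrArg (PowerSeries.coeff (R := ℚ) (m+1)) key_ps
  rw [PowerSeries.coeff_mul, Finset.Nat.sum_antidiagonal_eq_sum_range_succ_mk] at hc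
  simp only [map_sub, PowerSeries.coeff_succ_X_mul, PowerSeries.coeff_derivative,
    coeff_bps] at hc
  have hfac : ∀ k : ℕ, (k.factorial : ℚ) ≠ 0 := fun k => by
    exact_mod_cast k.factorial_ne_zero
  have hmul := congrArg (fun t : ℚ => ((m+1).factorial : ℚ) * t) hc
  simp only [Finset.mul_sum, mul_sub] at hmul
  calc ∑ l ∈ Finset.range (m + 2), ((m+1).choose l : ℚ) * _root_.bernoulli l
        * _root_.bernoulli (m + 1 - l)
      = ∑ l ∈ Finset.range (m + 2), ((m+1).factorial : ℚ) *
          (_root_.bernoulli l / l.factorial * (_root_.bernoulli (m+1-l) / (m+1-l).factorial)) := by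
        refine Finset.sum_congr rfl fun l hl => ?_
        have hle : l ≤ m + 1 := Nat.lt_succ_iff.mp (Finset.mem_range.mp hl)
        rw [Nat.cast_choose ℚ hle]
        field_simp
    _ = -((m : ℚ)) * _root_.bernoulli (m+1) - ((m : ℚ)+1) * _root_.bernoulli m := by
        rw [hmul]
        rw [Nat.factorial_succ]
        push_cast
        field_simp
        ring

open Polynomial in
lemma poly_ext_deriv (p q : ℚ[X]) (hd : derivative p = derivative q)
    (h0 : p.eval 0 = q.eval 0) : p = q := by
  have hz : derivative (p - q) = 0 := by rw [derivative_sub, hd, sub_self]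
  have := Polynomial.eq_C_of_natDegree_eq_zero
    (Polynomial.natDegree_eq_zero_of_derivative_eq_zero hz)
  have hc : (p - q).coeff 0 = 0 := by
    have := Polynomial.eval_sub p q 0
    simp [Polynomial.coeff_zero_eq_eval_zero, h0]
  rw [hc, map_zero] at this
  have := sub_eq_zero.mp this
  exact this

open Polynomial in
lemma euler_poly (n : ℕ) (hn : 1 ≤ n) :
    ∑ l ∈ Finset.range (n + 1),
        Polynomial.C ((n.choose l : ℚ) * _root_.bernoulli l) * Polynomial.bernoulli (n - l)
      = Polynomial.C (n : ℚ) * (Polynomial.X - 1) * Polynomial.bernoulli (n - 1)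
        - Polynomial.C ((n : ℚ) - 1) * Polynomial.bernoulli n := by
  induction n, hn using Nat.le_induction with
  | base =>
      simp [Finset.sum_range_succ, Polynomial.bernoulli, _root_.bernoulli,
        Polynomial.monomial_one_one_eq_X]
      rw [show (1 : ℚ[X]) = Polynomial.C 1 from rfl, show (1:ℚ) = 2⁻¹ + 2⁻¹ by norm_num,
        Polynomial.C_add]
      ring
  | succ n hn ih =>
      apply poly_ext_deriv
      · -- derivatives
        have hterm : ∀ l ∈ Finset.range (n+1),
            derivative (Polynomial.C (((n+1).choose l : ℚ) * _root_.bernoulli l)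
                * Polynomial.bernoulli (n+1-l))
              = Polynomial.C ((n:ℚ)+1) *
                  (Polynomial.C ((n.choose l : ℚ) * _root_.bernoulli l)
                    * Polynomial.bernoulli (n-l)) := by
          intro l hl
          have hl' : l ≤ n := Nat.lt_succ_iff.mp (Finset.mem_range.mp hl)
          rw [derivative_mul, Polynomial.derivative_C, zero_mul, zero_add,
            Polynomial.derivative_bernoulli]
          have h1 : n + 1 - l - 1 = n - l := by omega
          rw [h1, ← Polynomial.C_eq_natCast (R := ℚ) (n+1-l), ← mul_assoc, ← Polynomial.C_mul,
            ← mul_assoc, ← Polynomial.C_mul]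
          congr 2
          have hcast := Nat.choose_mul_succ_eq n l
          have hc : ((n+1).choose l : ℚ) * ((n+1-l : ℕ) : ℚ)
              = ((n:ℚ)+1) * (n.choose l : ℚ) := by
            rw [mul_comm ((n:ℚ)+1)]
            exact_mod_cast congrArg (Nat.cast : ℕ → ℚ) hcast.symm
          linear_combination _root_.bernoulli l * hc
        rw [derivative_sum, Finset.sum_range_succ]
        rw [Finset.sum_congr rfl hterm, ← Finset.mul_sum, ih]
        simp only [Nat.sub_self, Polynomial.bernoulli_zero, mul_one, Polynomial.derivative_C, add_zero,
          Nat.add_sub_cancel]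
        simp only [derivative_sub, derivative_mul, Polynomial.derivative_C,
          Polynomial.derivative_X, Polynomial.derivative_one,
          Polynomial.derivative_bernoulli_add_one, Polynomial.derivative_bernoulli,
          zero_mul, mul_zero, zero_add, add_zero, sub_zero, mul_one]
        simp only [← Polynomial.C_eq_natCast]
        push_cast
        simp only [Polynomial.C_add, Polynomial.C_sub, Polynomial.C_1]
        ring
      · -- eval at 0
        simp only [eval_finset_sum, eval_mul, eval_sub, eval_C, eval_X,
          Polynomial.bernoulli_eval_zero, eval_one]
        have := quad_bernoulli n
        push_cast
        push_cast at this
        rw [this]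
        ring

open Polynomial

theorem euler_identity_poly (n : ℕ) (hn : 1 ≤ n) (x : ℚ) :
    ∑ l ∈ Finset.range (n + 1),
        (n.choose l : ℚ) * _root_.bernoulli l * (Polynomial.bernoulli (n - l)).eval x
      = (n : ℚ) * (x - 1) * (Polynomial.bernoulli (n - 1)).eval x
        - ((n : ℚ) - 1) * (Polynomial.bernoulli n).eval x := by
  have h := congrArg (Polynomial.eval x) (euler_poly n hn)
  simp only [Polynomial.eval_finset_sum, Polynomial.eval_mul, Polynomial.eval_sub,
    Polynomial.eval_C, Polynomial.eval_X, Polynomial.eval_one] at h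
  simpa [mul_assoc] using h
end

section
/- For integers n ≥ 1: 2^{-n}·∑_{l=0}^{n} C(n,l) B_l(x) B_{n-l}(x) = ∑_{l=0}^{n} C(n,l) 2^{-l} B_l B_{n-l}(x) + (n/4) B_{n-1}(x), as an identity of polynomials in x. -/
/-!
Let `F_x(t) = t e^{xt} / (e^t - 1) = ∑ B_n(x) t^n / n!`. Both sides of the identity are `n!` times
the `n`-th coefficient of the two sides of `F_x(t/2)^2 = F_0(t/2) F_x(t) + (t/4) F_x(t)`, and this
becomes elementary after clearing denominators with `u = e^{t/2} - 1`, since `e^t - 1 = u (u + 2)`.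
-/

namespace PowerSeries

open Finset Nat

section Egf

variable {K : Type*} [Field K]

noncomputable def egf (a : ℕ → K) : K⟦X⟧ :=
  mk fun n => a n / n !

@[simp]
theorem coeff_egf (a : ℕ → K) (n : ℕ) : coeff n (egf a) = a n / n ! :=
  coeff_mk _ _

theorem egf_add (a b : ℕ → K) : egf a + egf b = egf (a + b) := by
  ext n
  simp [add_div]

theorem C_mul_egf (c : K) (a : ℕ → K) : C c * egf a = egf fun n => c * a n := by
  ext n
  simp [mul_div_assoc]

theorem rescale_egf (c : K) (a : ℕ → K) : rescale c (egf a) = egf fun n => c ^ n * a n := by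
  ext n
  simp [coeff_rescale, mul_div_assoc]

variable [CharZero K]

theorem egf_injective : Function.Injective (egf : (ℕ → K) → K⟦X⟧) := by
  intro a b h
  funext n
  have := congrArg (coeff n) h
  rwa [coeff_egf, coeff_egf, div_left_inj' (by exact_mod_cast n.factorial_ne_zero)] at this

theorem X_mul_egf (a : ℕ → K) : X * egf a = egf fun n => n * a (n - 1) := by
  ext (_ | n)
  · simp
  · rw [coeff_succ_X_mul, coeff_egf, coeff_egf, factorial_succ, cast_mul]
    field_simp
    simp

theorem egf_mul_egf (a b : ℕ → K) :
    egf a * egf b = egf fun n => ∑ l ∈ range (n + 1), n.choose l * a l * b (n - l) := by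
  ext n
  rw [coeff_mul, Nat.sum_antidiagonal_eq_sum_range_succ_mk, coeff_egf, sum_div]
  refine sum_congr rfl fun l hl => ?_
  rw [coeff_egf, coeff_egf, cast_choose K (mem_range_succ_iff.mp hl)]
  have : (n ! : K) ≠ 0 := by exact_mod_cast n.factorial_ne_zero
  field_simp

end Egf

theorem rescale_exp_sub_one_ne_zero {A : Type*} [CommRing A] [Algebra ℚ A] {a : A}
    (ha : a ≠ 0) :
    rescale a (exp A) - 1 ≠ 0 := by
  intro h
  have := congrArg (coeff 1) h
  simp [coeff_rescale, coeff_exp] at this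
  exact ha this

noncomputable def bernoulliEGF (x : ℚ) : ℚ⟦X⟧ :=
  egf fun n => (Polynomial.bernoulli n).eval x

theorem bernoulliEGF_mul_exp_sub_one (x : ℚ) :
    bernoulliEGF x * (exp ℚ - 1) = X * rescale x (exp ℚ) := by
  rw [← Polynomial.bernoulli_generating_function]
  congr 1
  ext n
  simp [bernoulliEGF, div_eq_inv_mul]

theorem rescale_half_bernoulliEGF_sq (x : ℚ) :
    rescale (1 / 2 : ℚ) (bernoulliEGF x) ^ 2 =
      rescale (1 / 2 : ℚ) (bernoulliEGF 0) * bernoulliEGF x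
        + C (1 / 4 : ℚ) * (X * bernoulliEGF x) := by
  set E := exp ℚ
  set u := rescale (1 / 2 : ℚ) E - 1
  set c := C (1 / 2 : ℚ)
  have half (y : ℚ) : rescale (1 / 2 : ℚ) (bernoulliEGF y) * u = c * X * rescale (y / 2) E := by
    have := congrArg (rescale (1 / 2 : ℚ)) (bernoulliEGF_mul_exp_sub_one y)
    rwa [map_mul, map_sub, map_one, map_mul, rescale_X, rescale_rescale,
      ← div_eq_mul_one_div] at this
  have half_zero : rescale (1 / 2 : ℚ) (bernoulliEGF 0) * u = c * X := by
    simpa [E, rescale_zero] using half 0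
  have exp_sq (y : ℚ) : rescale (y / 2) E ^ 2 = rescale y E := by
    rw [sq, exp_mul_exp_eq_exp_add, add_halves]
  have exp_sub_one : E - 1 = u ^ 2 + 2 * u := by
    have := exp_sq 1
    rw [rescale_one] at this
    linear_combination -this
  have hc : 2 * c = 1 := by
    rw [show (2 : ℚ⟦X⟧) = C 2 from rfl, ← map_mul]; norm_num
  have hc4 : c ^ 2 = C (1 / 4 : ℚ) := by rw [← map_pow]; norm_num
  have hu : u ≠ 0 := rescale_exp_sub_one_ne_zero (by norm_num)
  have hE : E - 1 ≠ 0 := by simpa using rescale_exp_sub_one_ne_zero (A := ℚ) one_ne_zero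
  -- after multiplying by `u² (e^t - 1)` both sides become `(t²/4) e^{xt} (e^t - 1)`
  apply mul_right_cancel₀ (mul_ne_zero (pow_ne_zero 2 hu) hE)
  linear_combination
    (E - 1) * (rescale (1 / 2 : ℚ) (bernoulliEGF x) * u + c * X * rescale (x / 2) E) * half x
    + c ^ 2 * X ^ 2 * (E - 1) * exp_sq x
    - u * bernoulliEGF x * (E - 1) * half_zero
    - (c * X * u + C (1 / 4 : ℚ) * X * u ^ 2) * bernoulliEGF_mul_exp_sub_one x
    + X ^ 2 * rescale x E * C (1 / 4 : ℚ) * exp_sub_one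
    + X ^ 2 * rescale x E * (E - 1 - 2 * u) * hc4 + X ^ 2 * rescale x E * u * c * hc

end PowerSeries

theorem bernoulli_half_convolution_aux_general (n : ℕ) (x : ℚ) :
    (1 / 2 ^ n) * ∑ l ∈ Finset.range (n + 1),
        (n.choose l : ℚ) * (Polynomial.bernoulli l).eval x * (Polynomial.bernoulli (n - l)).eval x
      = (∑ l ∈ Finset.range (n + 1),
          (n.choose l : ℚ) * (1 / 2 ^ l) * _root_.bernoulli l * (Polynomial.bernoulli (n - l)).eval x)
        + ((n : ℚ) / 4) * (Polynomial.bernoulli (n - 1)).eval x := by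
  have key := PowerSeries.rescale_half_bernoulliEGF_sq x
  simp only [PowerSeries.bernoulliEGF, PowerSeries.rescale_egf, sq, PowerSeries.egf_mul_egf,
    PowerSeries.X_mul_egf, PowerSeries.C_mul_egf, PowerSeries.egf_add] at key
  have hn := congrFun (PowerSeries.egf_injective key) n
  simp only [Pi.add_apply, Polynomial.bernoulli_eval_zero] at hn
  calc _ = ∑ l ∈ Finset.range (n + 1),
          (n.choose l : ℚ) * ((1 / 2) ^ l * (Polynomial.bernoulli l).eval x)
            * ((1 / 2) ^ (n - l) * (Polynomial.bernoulli (n - l)).eval x) := by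
        rw [Finset.mul_sum]
        refine Finset.sum_congr rfl fun l hl => ?_
        rw [← one_div_pow, ← pow_mul_pow_sub (1 / 2 : ℚ) (Finset.mem_range_succ_iff.mp hl)]
        ring
    _ = _ := by
        rw [hn]
        congr 1
        · exact Finset.sum_congr rfl fun l _ => by rw [one_div_pow]; ring
        · ring

theorem bernoulli_half_convolution_aux (n : ℕ) (hn : 1 ≤ n) (x : ℚ) :
    (1 / 2 ^ n) * ∑ l ∈ Finset.range (n + 1),
        (n.choose l : ℚ) * (Polynomial.bernoulli l).eval x * (Polynomial.bernoulli (n - l)).eval x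
      = (∑ l ∈ Finset.range (n + 1),
          (n.choose l : ℚ) * (1 / 2 ^ l) * _root_.bernoulli l * (Polynomial.bernoulli (n - l)).eval x)
        + ((n : ℚ) / 4) * (Polynomial.bernoulli (n - 1)).eval x :=
  bernoulli_half_convolution_aux_general n x
end

section
/- For real numbers a > 0 and integers n ≥ 1: ∑_{l=0}^{n-1} C(n,l)·((a)_l (n-l-1)!/(a)_n)·B_l(x) B_{n-l}(x) = ∑_{l=1}^{n} C(n,l)·((a(l-1)! + (a)_l)/(a)_{l+1})·B_l B_{n-l}(x) + (n/(a+1)) B_{n-1}(x) + H_{a,n} B_n(x), where H_{a,n} = ∑_{j=0}^{n-1} 1/(j+a). -/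
open Polynomial Finset

namespace SHBI

noncomputable def bp (m : ℕ) : ℝ[X] := (Polynomial.bernoulli m).map (algebraMap ℚ ℝ)

noncomputable def Bn (m : ℕ) : ℝ := ((bernoulli m : ℚ) : ℝ)

lemma bp_zero : bp 0 = 1 := by simp [bp]

lemma bp_deriv (m : ℕ) : derivative (bp m) = C (m : ℝ) * bp (m - 1) := by
  rw [bp, derivative_map, Polynomial.derivative_bernoulli, Polynomial.map_mul,
    Polynomial.map_natCast, bp, C_eq_natCast]

lemma bp_eval_zero (m : ℕ) : (bp m).eval 0 = Bn m := by
  rw [bp, eval_map, eval₂_at_zero, Polynomial.coeff_zero_eq_eval_zero,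
    Polynomial.bernoulli_eval_zero, Bn, eq_ratCast]

lemma bp_eval_one (m : ℕ) : (bp m).eval 1 = Bn m + (if m = 1 then 1 else 0) := by
  rw [bp, eval_map, eval₂_at_one, Polynomial.bernoulli_eval_one]
  by_cases h : m = 1
  · subst h; norm_num [Bn, bernoulli'_one]
  · simp [h, Bn, ← bernoulli_eq_bernoulli'_of_ne_one h]

noncomputable def J (p : ℝ[X]) : ℝ := ∫ x in (0:ℝ)..1, p.eval x

lemma J_deriv (p : ℝ[X]) : J (derivative p) = p.eval 1 - p.eval 0 := by
  apply intervalIntegral.integral_deriv_eq_sub' (fun x => p.eval x)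
  · funext x; exact Polynomial.deriv (p := p)
  · exact fun x _ => p.differentiableAt
  · exact (p.derivative.continuous_aeval).continuousOn

lemma J_add (p q : ℝ[X]) : J (p + q) = J p + J q := by
  unfold J
  simp only [eval_add]
  exact intervalIntegral.integral_add (p.continuous_aeval.intervalIntegrable _ _)
    (q.continuous_aeval.intervalIntegrable _ _)

lemma J_C (r : ℝ) : J (C r) = r := by
  simp [J]

lemma J_Cmul (r : ℝ) (p : ℝ[X]) : J (C r * p) = r * J p := by
  unfold J
  simp only [eval_mul, eval_C]
  exact intervalIntegral.integral_const_mul r _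

lemma J_sub (p q : ℝ[X]) : J (p - q) = J p - J q := by
  unfold J
  simp only [eval_sub]
  exact intervalIntegral.integral_sub (p.continuous_aeval.intervalIntegrable _ _)
    (q.continuous_aeval.intervalIntegrable _ _)

lemma J_sum {α : Type*} (s : Finset α) (f : α → ℝ[X]) : J (∑ i ∈ s, f i) = ∑ i ∈ s, J (f i) := by
  unfold J
  simp only [eval_finset_sum]
  exact intervalIntegral.integral_finset_sum (fun i _ => ((f i).continuous_aeval.intervalIntegrable _ _))


lemma J_bp {m : ℕ} (hm : 1 ≤ m) : J (bp m) = 0 := by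
  have h := J_deriv (bp (m + 1))
  rw [bp_deriv, Nat.add_sub_cancel, J_Cmul, bp_eval_one, bp_eval_zero] at h
  have hm1 : ¬ (m + 1 = 1) := by omega
  rw [if_neg hm1] at h
  have : ((m:ℝ) + 1) ≠ 0 := by positivity
  push_cast at h
  field_simp at h
  rw [add_zero, sub_self] at h
  exact (mul_eq_zero.mp h).resolve_left this

lemma J_parts (p q : ℝ[X]) :
    J (derivative p * q) + J (p * derivative q)
      = p.eval 1 * q.eval 1 - p.eval 0 * q.eval 0 := by
  have h := J_deriv (p * q)
  rw [derivative_mul, J_add] at h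
  simpa using h

lemma Iform : ∀ m : ℕ, 1 ≤ m → ∀ k : ℕ, 1 ≤ k →
    J (bp m * bp k) = (-1)^(m+1) * (m.factorial : ℝ) * (k.factorial : ℝ)
      / ((m+k).factorial : ℝ) * Bn (m+k) := by
  intro m hm
  induction m, hm using Nat.le_induction with
  | base =>
    intro k hk
    have h := J_parts (bp 1) (bp (k+1))
    rw [bp_deriv 1, bp_deriv (k+1), Nat.add_sub_cancel] at h
    simp only [Nat.sub_self, bp_zero, mul_one, Nat.cast_one, map_one, one_mul] at h
    rw [J_bp (by omega), mul_comm (bp 1), mul_assoc, J_Cmul, mul_comm (bp k),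
      bp_eval_one, bp_eval_one, bp_eval_zero, bp_eval_zero] at h
    have hk1 : ¬ (k + 1 = 1) := by omega
    rw [if_neg hk1, if_pos rfl] at h
    have hB1 : Bn 1 = -(1/2) := by norm_num [Bn]
    rw [hB1] at h
    have hkk : ((k:ℝ) + 1) ≠ 0 := by positivity
    have : J (bp 1 * bp k) = Bn (k+1) / ((k:ℝ)+1) := by
      field_simp at h ⊢
      push_cast at h ⊢
      linarith
    rw [this]
    rw [show (1 + k) = (k + 1) by ring]
    rw [Nat.factorial_succ]
    push_cast [Nat.factorial_succ]
    have : (k.factorial : ℝ) ≠ 0 := by positivity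
    field_simp
    ring
  | succ m hm ih =>
    intro k hk
    have h := J_parts (bp (m+1)) (bp (k+1))
    rw [bp_deriv (m+1), bp_deriv (k+1), Nat.add_sub_cancel, Nat.add_sub_cancel] at h
    rw [mul_assoc, J_Cmul, mul_comm (bp (m+1)), mul_assoc, J_Cmul,
      bp_eval_one, bp_eval_one, bp_eval_zero, bp_eval_zero,
      if_neg (by omega : ¬ (m+1=1)), if_neg (by omega : ¬ (k+1=1))] at h
    rw [ih (k+1) (by omega), mul_comm (bp k)] at h
    -- h : (m+1) * ((-1)^(m+1) * m! * (k+1)! / (m+(k+1))! * Bn (m+(k+1))) + (k+1) * J (bp (m+1) * bp k) = cancel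
    have hkk : ((k:ℝ) + 1) ≠ 0 := by positivity
    have hfac : ((m + 1 + k).factorial : ℝ) ≠ 0 := by positivity
    have hrw : m + (k+1) = m + 1 + k := by omega
    rw [hrw] at h
    have : J (bp (m+1) * bp k)
        = -(((m:ℝ)+1) * ((-1)^(m+1) * (m.factorial:ℝ) * ((k+1).factorial:ℝ)
            / ((m+1+k).factorial : ℝ) * Bn (m+1+k))) / ((k:ℝ)+1) := by
      field_simp at h ⊢
      push_cast at h ⊢
      linarith
    rw [this]
    push_cast [Nat.factorial_succ]
    have h1 : (k.factorial : ℝ) ≠ 0 := by positivity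
    field_simp
    ring


noncomputable def P (a : ℝ) (m : ℕ) : ℝ := (ascPochhammer ℝ m).eval a
noncomputable def cc (a : ℝ) (n l : ℕ) : ℝ := P a l * ((n - l - 1).factorial : ℝ) / P a n
noncomputable def dd (a : ℝ) (l : ℕ) : ℝ :=
  (a * ((l - 1).factorial : ℝ) + P a l) / P a (l + 1)
noncomputable def Hh (a : ℝ) (n : ℕ) : ℝ := ∑ j ∈ range n, 1 / ((j : ℝ) + a)

noncomputable def L (a : ℝ) (n : ℕ) : ℝ[X] :=
  ∑ l ∈ range n, C ((n.choose l : ℝ) * cc a n l) * (bp l * bp (n - l))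

noncomputable def R (a : ℝ) (n : ℕ) : ℝ[X] :=
  (∑ l ∈ Icc 1 n, C ((n.choose l : ℝ) * dd a l * Bn l) * bp (n - l))
    + C ((n : ℝ) / (a + 1)) * bp (n - 1) + C (Hh a n) * bp n

variable {a : ℝ} (ha : 0 < a)

lemma P_zero : P a 0 = 1 := by simp [P, ascPochhammer_zero]

lemma P_succ (m : ℕ) : P a (m + 1) = P a m * (a + m) := by
  simp [P, ascPochhammer_succ_eval]

include ha

lemma P_pos (m : ℕ) : 0 < P a m := ascPochhammer_pos m a ha

lemma cc_key (i k : ℕ) : cc a (i+k+2) (i+1) + cc a (i+k+2) i = cc a (i+k+1) i := by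
  have h1 : i+k+2 - (i+1) - 1 = k := by omega
  have h2 : i+k+2 - i - 1 = k + 1 := by omega
  have h3 : i+k+1 - i - 1 = k := by omega
  have e2 : P a (i+k+2) = P a (i+k+1) * (a + (i+k+1)) := by
    rw [show i+k+2 = (i+k+1)+1 by omega, P_succ]; push_cast; ring_nf
  rw [cc, cc, cc, h1, h2, h3, P_succ i, e2]
  have hp1 : P a (i+k+1) ≠ 0 := (P_pos ha _).ne'
  have hp2 : (a + ((i:ℝ)+k+1)) ≠ 0 := by positivity
  have hfac : ((k+1).factorial : ℝ) = ((k:ℝ)+1) * (k.factorial : ℝ) := by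
    push_cast [Nat.factorial_succ]; ring
  field_simp
  rw [hfac]
  ring

lemma cc_top (n : ℕ) (hn : 1 ≤ n) : cc a n (n-1) = Hh a n - Hh a (n-1) := by
  obtain ⟨m, rfl⟩ : ∃ m, n = m + 1 := ⟨n-1, by omega⟩
  rw [cc, Hh, Hh, Nat.add_sub_cancel, Finset.sum_range_succ, show m+1-m-1 = 0 by omega,
    P_succ]
  have hp : P a m ≠ 0 := (P_pos ha _).ne'
  have : a + (m:ℝ) ≠ 0 := by positivity
  field_simp
  ring

omit ha in
lemma T_id (n : ℕ) :
    (a + (n+1)) * (∑ i ∈ range n, (-1:ℝ)^i * P a (i+1) * ((n-1-i).factorial : ℝ))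
      = a * (n.factorial : ℝ) + (-1)^(n+1) * P a (n+1) := by
  set T1 : ℝ := ∑ i ∈ range (n+1), (-1:ℝ)^i * P a (i+1) * ((n-i).factorial : ℝ) with hT1
  set W : ℝ := ∑ j ∈ range n, (-1:ℝ)^j * P a (j+1) * ((n-j).factorial : ℝ) with hW
  have E3 : T1 = W + (-1)^n * P a (n+1) := by
    rw [hT1, Finset.sum_range_succ, Nat.sub_self]; norm_num
    exact hW.symm
  have E1 : T1 = a * (n.factorial : ℝ)
      - ∑ j ∈ range n, (-1:ℝ)^j * P a (j+2) * ((n-1-j).factorial : ℝ) := by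
    rw [hT1, Finset.sum_range_succ']
    have : ∀ j, (-1:ℝ)^(j+1) * P a (j+1+1) * ((n-(j+1)).factorial : ℝ)
        = -((-1:ℝ)^j * P a (j+2) * ((n-1-j).factorial : ℝ)) := by
      intro j
      rw [show n-(j+1) = n-1-j by omega, show j+1+1 = j+2 by omega]
      ring
    rw [Finset.sum_congr rfl (fun j _ => this j)]
    rw [Finset.sum_neg_distrib]
    simp [P_succ, P_zero]
    ring
  have E2 : ∑ j ∈ range n, (-1:ℝ)^j * P a (j+2) * ((n-1-j).factorial : ℝ)
      = (a + (n+1)) * (∑ i ∈ range n, (-1:ℝ)^i * P a (i+1) * ((n-1-i).factorial : ℝ)) - W := by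
    rw [Finset.mul_sum, ← Finset.sum_sub_distrib]
    apply Finset.sum_congr rfl
    intro j hj
    have hjn : j < n := Finset.mem_range.mp hj
    obtain ⟨k, rfl⟩ : ∃ k, n = j + k + 1 := ⟨n-j-1, by omega⟩
    rw [show j+k+1-j = k+1 by omega, show j+k+1-1-j = k by omega,
      show j+2 = (j+1)+1 by omega, P_succ, Nat.factorial_succ]
    push_cast
    ring
  rw [E2] at E1
  rw [E3] at E1
  linear_combination E1


omit ha in
lemma J_L (m : ℕ) :
    J (L a (m+2)) = Bn (m+2) * (∑ i ∈ range (m+1), (-1:ℝ)^i * cc a (m+2) (i+1)) := by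
  rw [L, J_sum, Finset.sum_range_succ']
  have h0 : J (C (((m+2).choose 0 : ℝ) * cc a (m+2) 0) * (bp 0 * bp (m+2-0)))
      = 0 := by
    rw [bp_zero, one_mul, J_Cmul, J_bp (by omega)]
    ring
  rw [h0, add_zero, Finset.mul_sum]
  apply Finset.sum_congr rfl
  intro i hi
  have him : i < m + 1 := Finset.mem_range.mp hi
  rw [J_Cmul, Iform (i+1) (by omega) (m+2-(i+1)) (by omega)]
  rw [show (i+1) + (m+2-(i+1)) = m+2 by omega, show m+2-(i+1) = m+1-i by omega]
  have hcf : ((m+2).choose (i+1) : ℝ) * ((i+1).factorial : ℝ) * ((m+1-i).factorial : ℝ)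
      = ((m+2).factorial : ℝ) := by
    rw [← Nat.cast_mul, ← Nat.cast_mul]
    congr 1
    have := Nat.choose_mul_factorial_mul_factorial (show i+1 ≤ m+2 by omega)
    rw [show m+2-(i+1) = m+1-i by omega] at this
    exact this
  have hfz : ((m+2).factorial : ℝ) ≠ 0 := by positivity
  have : ((m+2).choose (i+1) : ℝ) * ((-1:ℝ)^(i+1+1) * ((i+1).factorial : ℝ)
      * ((m+1-i).factorial : ℝ) / ((m+2).factorial : ℝ))
      = (-1:ℝ)^i := by
    field_simp
    rw [show ((m+2).choose (i+1) : ℝ) * (-1:ℝ)^(i+1+1) * ((i+1).factorial : ℝ)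
      * ((m+1-i).factorial : ℝ) = (-1:ℝ)^(i+1+1) * (((m+2).choose (i+1) : ℝ)
      * ((i+1).factorial : ℝ) * ((m+1-i).factorial : ℝ)) by ring, hcf]
    ring
  calc ((m+2).choose (i+1) : ℝ) * cc a (m+2) (i+1)
      * ((-1:ℝ)^(i+1+1) * ((i+1).factorial : ℝ) * ((m+1-i).factorial : ℝ)
        / ((m+2).factorial : ℝ) * Bn (m+2))
      = (((m+2).choose (i+1) : ℝ) * ((-1:ℝ)^(i+1+1) * ((i+1).factorial : ℝ)
        * ((m+1-i).factorial : ℝ) / ((m+2).factorial : ℝ))) * (cc a (m+2) (i+1) * Bn (m+2)) := by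
        ring
    _ = Bn (m+2) * ((-1:ℝ)^i * cc a (m+2) (i+1)) := by rw [this]; ring

lemma J_R (m : ℕ) : J (R a (m+2)) = dd a (m+2) * Bn (m+2) := by
  rw [R, J_add, J_add, J_Cmul, J_Cmul, show m+2-1 = m+1 from rfl,
    J_bp (by omega : 1 ≤ m+1), J_bp (by omega : 1 ≤ m+2), J_sum,
    Finset.sum_Icc_succ_top (by omega : 1 ≤ m+2)]
  have h1 : ∀ l ∈ Icc 1 (m+1),
      J (C (((m+2).choose l : ℝ) * dd a l * Bn l) * bp (m+2-l)) = 0 := by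
    intro l hl
    rw [Finset.mem_Icc] at hl
    rw [J_Cmul, J_bp (by omega : 1 ≤ m+2-l), mul_zero]
  rw [Finset.sum_eq_zero h1, Nat.sub_self, bp_zero, J_Cmul,
    show (1:ℝ[X]) = C 1 from (map_one C).symm, J_C]
  simp


omit ha in
lemma Bn_odd {k : ℕ} (hk : Odd k) (h1 : 1 < k) : Bn k = 0 := by
  rw [Bn, bernoulli_eq_bernoulli'_of_ne_one (by omega), bernoulli'_eq_zero_of_odd hk h1]
  norm_num

lemma JLR (m : ℕ) : J (L a (m+2)) = J (R a (m+2)) := by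
  rw [J_L, J_R ha]
  rcases Nat.even_or_odd m with he | ho
  · -- even case : the sum equals dd a (m+2)
    have hT := T_id (a := a) (m+1)
    simp only [Nat.add_sub_cancel] at hT
    rw [show m+1+1 = m+2 from rfl] at hT
    have hsum : ∑ i ∈ range (m+1), (-1:ℝ)^i * cc a (m+2) (i+1)
        = (∑ i ∈ range (m+1), (-1:ℝ)^i * P a (i+1) * ((m-i).factorial : ℝ))
          / P a (m+2) := by
      rw [Finset.sum_div]
      apply Finset.sum_congr rfl
      intro i hi
      rw [cc, show m+2-(i+1)-1 = m-i by omega]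
      ring
    have hpow : (-1:ℝ)^(m+2) = 1 := by
      have hev : Even (m+2) := by rcases he with ⟨k, rfl⟩; exact ⟨k+1, by omega⟩
      exact hev.neg_one_pow
    rw [hpow] at hT
    have hp2 : P a (m+2) ≠ 0 := (P_pos ha _).ne'
    have hp3 : P a (m+2+1) = P a (m+2) * (a + ((m:ℝ)+2)) := by
      rw [P_succ]; push_cast; ring
    have han : a + ((m:ℝ)+2) ≠ 0 := by positivity
    have hd : dd a (m+2)
        = (a * ((m+1).factorial : ℝ) + P a (m+2)) / (P a (m+2) * (a + ((m:ℝ)+2))) := by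
      rw [dd, show m+2-1 = m+1 from rfl, hp3]
    have hsum2 : ∑ i ∈ range (m+1), (-1:ℝ)^i * cc a (m+2) (i+1) = dd a (m+2) := by
      rw [hsum, hd, div_eq_div_iff hp2 (mul_ne_zero hp2 han)]
      push_cast at hT ⊢
      linear_combination P a (m+2) * hT
    rw [hsum2]; ring
  · have hB : Bn (m+2) = 0 := by
      have hodd : Odd (m+2) := by rcases ho with ⟨k, rfl⟩; exact ⟨k+1, by omega⟩
      exact Bn_odd hodd (by omega)
    rw [hB]; ring

omit ha in
lemma choose_mul (n k : ℕ) (h : k ≤ n) :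
    (((n+1).choose k : ℝ)) * (((n+1-k : ℕ)) : ℝ) = ((n+1 : ℕ) : ℝ) * ((n.choose k : ℝ)) := by
  rw [← Nat.cast_mul, ← Nat.cast_mul, mul_comm ((n+1:ℕ)) _, ← Nat.choose_mul_succ_eq, mul_comm]

omit ha in
lemma choose_mul' (m i : ℕ) :
    (((m+2).choose (i+1) : ℝ)) * (((i+1:ℕ)):ℝ) = (((m+2:ℕ)) : ℝ) * (((m+1).choose i : ℝ)) := by
  have h : ((m+2).choose (i+1)) * (i+1) = (m+2) * ((m+1).choose i) := by
    simpa [Nat.succ_eq_add_one] using (Nat.add_one_mul_choose_eq (m+1) i).symm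
  exact_mod_cast h

lemma derivL (m : ℕ) :
    derivative (L a (m+2)) = C (((m+2:ℕ)) : ℝ) * L a (m+1)
      + C ((((m+2:ℕ)) : ℝ) * cc a (m+2) (m+1)) * bp (m+1) := by
  rw [L, derivative_sum]
  have hterm : ∀ l,
      derivative (C (((m+2).choose l : ℝ) * cc a (m+2) l) * (bp l * bp (m+2-l)))
      = C (((m+2).choose l : ℝ) * cc a (m+2) l * (l:ℝ)) * (bp (l-1) * bp (m+2-l))
        + C (((m+2).choose l : ℝ) * cc a (m+2) l * (((m+2-l : ℕ)) : ℝ))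
          * (bp l * bp (m+2-l-1)) := by
    intro l
    rw [derivative_mul, derivative_C, derivative_mul, bp_deriv, bp_deriv]
    simp only [map_mul]
    ring
  rw [Finset.sum_congr rfl (fun l _ => hterm l), Finset.sum_add_distrib]
  rw [Finset.sum_range_succ' (fun l => C (((m+2).choose l : ℝ) * cc a (m+2) l * (l:ℝ))
      * (bp (l-1) * bp (m+2-l))) (m+1)]
  rw [Finset.sum_range_succ (fun l => C (((m+2).choose l : ℝ) * cc a (m+2) l
      * (((m+2-l : ℕ)) : ℝ)) * (bp l * bp (m+2-l-1))) (m+1)]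
  have hz : C (((m+2).choose 0 : ℝ) * cc a (m+2) 0 * ((0:ℕ):ℝ)) * (bp (0-1) * bp (m+2-0)) = 0 := by
    simp
  rw [hz, add_zero]
  have hmain : (∑ i ∈ range (m+1), C (((m+2).choose (i+1) : ℝ) * cc a (m+2) (i+1) * ((i+1 : ℕ):ℝ))
        * (bp (i+1-1) * bp (m+2-(i+1))))
      + (∑ l ∈ range (m+1), C (((m+2).choose l : ℝ) * cc a (m+2) l * (((m+2-l : ℕ)) : ℝ))
        * (bp l * bp (m+2-l-1)))
      = C (((m+2:ℕ)) : ℝ) * L a (m+1) := by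
    rw [L, Finset.mul_sum, ← Finset.sum_add_distrib]
    apply Finset.sum_congr rfl
    intro i hi
    have him : i < m + 1 := Finset.mem_range.mp hi
    rw [show i+1-1 = i from rfl, show m+2-(i+1) = m+1-i by omega,
      show m+2-i-1 = m+1-i by omega]
    rw [← add_mul]
    have hck : cc a (m+2) (i+1) + cc a (m+2) i = cc a (m+1) i := by
      have := cc_key ha i (m-i)
      rw [show i+(m-i)+2 = m+2 by omega, show i+(m-i)+1 = m+1 by omega] at this
      exact this
    have h1 : ((m+2).choose (i+1) : ℝ) * ((i+1 : ℕ):ℝ) = ((m+2:ℕ):ℝ) * ((m+1).choose i : ℝ) := by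
      have := choose_mul' m i
      push_cast at this ⊢
      linarith
    have h2 : ((m+2).choose i : ℝ) * (((m+2-i : ℕ)) : ℝ) = ((m+2:ℕ):ℝ) * ((m+1).choose i : ℝ) := by
      have := choose_mul (m+1) i (by omega)
      push_cast at this ⊢
      linarith
    have hco : ((m+2).choose (i+1) : ℝ) * cc a (m+2) (i+1) * ((i+1 : ℕ):ℝ)
        + ((m+2).choose i : ℝ) * cc a (m+2) i * (((m+2-i : ℕ)) : ℝ)
        = ((m+2:ℕ):ℝ) * (((m+1).choose i : ℝ) * cc a (m+1) i) := by
      calc ((m+2).choose (i+1) : ℝ) * cc a (m+2) (i+1) * ((i+1 : ℕ):ℝ)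
          + ((m+2).choose i : ℝ) * cc a (m+2) i * (((m+2-i : ℕ)) : ℝ)
          = (((m+2).choose (i+1) : ℝ) * ((i+1 : ℕ):ℝ)) * cc a (m+2) (i+1)
            + (((m+2).choose i : ℝ) * (((m+2-i : ℕ)) : ℝ)) * cc a (m+2) i := by ring
        _ = ((m+2:ℕ):ℝ) * ((m+1).choose i : ℝ) * (cc a (m+2) (i+1) + cc a (m+2) i) := by
            rw [h1, h2]; ring
        _ = ((m+2:ℕ):ℝ) * (((m+1).choose i : ℝ) * cc a (m+1) i) := by rw [hck]; ring
    rw [← map_add, hco, map_mul, map_mul, mul_assoc]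
  rw [← add_assoc, hmain]
  congr 1
  simp only [show m+2-(m+1) = 1 from by omega, show m+2-(m+1)-1 = 0 from by omega,
    Nat.choose_succ_self_right]
  push_cast
  ring_nf
  rw [bp_zero]
  ring


lemma Ceq {r s : ℝ} (h : r = s) : (C r : ℝ[X]) = C s := congrArg C h

lemma derivR (m : ℕ) :
    derivative (R a (m+2)) = C (((m+2:ℕ)) : ℝ) * R a (m+1)
      + C ((((m+2:ℕ)) : ℝ) * (Hh a (m+2) - Hh a (m+1))) * bp (m+1) := by
  rw [R, R, derivative_add, derivative_add, derivative_sum]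
  have hterm : ∀ l, derivative (C (((m+2).choose l : ℝ) * dd a l * Bn l) * bp (m+2-l))
      = C (((m+2).choose l : ℝ) * dd a l * Bn l * (((m+2-l:ℕ)):ℝ)) * bp (m+2-l-1) := by
    intro l
    rw [derivative_mul, derivative_C, bp_deriv]
    simp only [map_mul]
    ring
  rw [Finset.sum_congr rfl (fun l _ => hterm l),
    Finset.sum_Icc_succ_top (by omega : 1 ≤ m+2)]
  have htop0 : C (((m+2).choose (m+2) : ℝ) * dd a (m+2) * Bn (m+2) * (((m+2-(m+2):ℕ)):ℝ))
      * bp (m+2-(m+2)-1) = 0 := by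
    rw [Nat.sub_self]
    norm_num
  rw [htop0, add_zero]
  have hsum : ∑ l ∈ Icc 1 (m+1), C (((m+2).choose l : ℝ) * dd a l * Bn l * (((m+2-l:ℕ)):ℝ))
        * bp (m+2-l-1)
      = C (((m+2:ℕ)):ℝ) * ∑ l ∈ Icc 1 (m+1), C (((m+1).choose l : ℝ) * dd a l * Bn l)
        * bp (m+1-l) := by
    rw [Finset.mul_sum]
    apply Finset.sum_congr rfl
    intro l hl
    rw [Finset.mem_Icc] at hl
    have hcm := choose_mul (m+1) l (by omega)
    rw [show m+1+1 = m+2 from rfl] at hcm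
    rw [show m+2-l-1 = m+1-l by omega, ← mul_assoc, ← map_mul]
    exact congrArg (fun r : ℝ => C r * bp (m+1-l))
      (by linear_combination (dd a l * Bn l) * hcm)
  rw [hsum]
  rw [derivative_mul, derivative_C, bp_deriv, derivative_mul, derivative_C, bp_deriv]
  rw [show m+2-1 = m+1 from rfl, show m+1-1 = m from rfl]
  simp only [zero_mul, zero_add]
  rw [mul_add, mul_add]
  have hmid : C (((m+2:ℕ):ℝ) / (a+1)) * (C (((m+1:ℕ)):ℝ) * bp m)
      = C (((m+2:ℕ)):ℝ) * (C (((m+1:ℕ):ℝ) / (a+1)) * bp m) := by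
    rw [← mul_assoc, ← map_mul, ← mul_assoc, ← map_mul]
    exact congrArg (fun r : ℝ => C r * bp m) (by ring)
  have hlast : C (Hh a (m+2)) * (C (((m+2:ℕ)):ℝ) * bp (m+1))
      = C (((m+2:ℕ)):ℝ) * (C (Hh a (m+1)) * bp (m+1))
        + C ((((m+2:ℕ)):ℝ) * (Hh a (m+2) - Hh a (m+1))) * bp (m+1) := by
    rw [← mul_assoc, ← map_mul, ← mul_assoc, ← map_mul, ← add_mul, ← map_add]
    exact congrArg (fun r : ℝ => C r * bp (m+1)) (by ring)
  rw [hmid, hlast]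
  ring

lemma base_case : L a 1 = R a 1 := by
  rw [L, R, Finset.sum_range_one, Finset.Icc_self, Finset.sum_singleton]
  have hP1 : P a 1 = a := by
    rw [show (1:ℕ) = 0+1 from rfl, P_succ, P_zero]; push_cast; ring
  have hP2 : P a (1+1) = a*(a+1) := by
    rw [P_succ, hP1]; push_cast; ring
  have ha0 : a ≠ 0 := ha.ne'
  have ha1 : a + 1 ≠ 0 := by positivity
  have hcc : cc a 1 0 = 1/a := by
    rw [cc, P_zero, hP1]; norm_num
  have hdd : dd a 1 * Bn 1 = -(1/(a+1)) := by
    have hB : Bn 1 = -(1/2) := by norm_num [Bn]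
    rw [dd, hP1, hP2, hB]
    norm_num [Nat.factorial]
    field_simp
    ring
  have hH : Hh a 1 = 1/a := by rw [Hh]; simp
  rw [show (1:ℕ)-0 = 1 from rfl, show (1:ℕ)-1 = 0 from rfl, bp_zero, hcc, hH]
  norm_num
  rw [← map_mul, ← map_add]
  norm_num [hdd]

lemma main_eq (n : ℕ) (hn : 1 ≤ n) : L a n = R a n := by
  induction n, hn using Nat.le_induction with
  | base => exact base_case ha
  | succ n hn ih =>
    obtain ⟨m, rfl⟩ : ∃ m, n = m+1 := ⟨n-1, by omega⟩
    have hder : derivative (L a (m+2) - R a (m+2)) = 0 := by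
      rw [derivative_sub, derivL ha, derivR ha, ih]
      have hcc : cc a (m+2) (m+1) = Hh a (m+2) - Hh a (m+1) := by
        have h := cc_top ha (m+2) (by omega)
        rw [show m+2-1 = m+1 from rfl] at h
        exact h
      rw [hcc]
      ring
    have hC := Polynomial.eq_C_of_derivative_eq_zero hder
    have hJ : J (L a (m+2) - R a (m+2)) = 0 := by rw [J_sub, JLR ha, sub_self]
    rw [hC, J_C] at hJ
    rw [hJ, map_zero] at hC
    exact sub_eq_zero.mp hC


omit ha in
lemma bp_eval_aeval (x : ℝ) (m : ℕ) :
    (bp m).eval x = aeval x (Polynomial.bernoulli m) := by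
  rw [bp, eval_map, aeval_def]

end SHBI


theorem shifted_harmonic_bernoulli_identity (a : ℝ) (ha : 0 < a) (n : ℕ) (hn : 1 ≤ n) (x : ℝ) :
    ∑ l ∈ Finset.range n, (n.choose l : ℝ) *
        ((ascPochhammer ℝ l).eval a * (Nat.factorial (n - l - 1) : ℝ) /
          (ascPochhammer ℝ n).eval a) *
        (aeval x (Polynomial.bernoulli l)) * (aeval x (Polynomial.bernoulli (n - l)))
      = (∑ l ∈ Finset.Icc 1 n, (n.choose l : ℝ) *
          ((a * (Nat.factorial (l - 1) : ℝ) + (ascPochhammer ℝ l).eval a) /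
            (ascPochhammer ℝ (l + 1)).eval a) *
          ((bernoulli l : ℚ) : ℝ) * aeval x (Polynomial.bernoulli (n - l)))
        + ((n : ℝ) / (a + 1)) * aeval x (Polynomial.bernoulli (n - 1))
        + (∑ j ∈ Finset.range n, 1 / ((j : ℝ) + a)) * aeval x (Polynomial.bernoulli n) := by
  have h := congrArg (Polynomial.eval x) (SHBI.main_eq ha n hn)
  have eL : ∑ l ∈ Finset.range n, (n.choose l : ℝ) *
        ((ascPochhammer ℝ l).eval a * (Nat.factorial (n - l - 1) : ℝ) /
          (ascPochhammer ℝ n).eval a) *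
        (aeval x (Polynomial.bernoulli l)) * (aeval x (Polynomial.bernoulli (n - l)))
      = (SHBI.L a n).eval x := by
    rw [SHBI.L]
    simp only [Polynomial.eval_finset_sum, Polynomial.eval_mul, Polynomial.eval_C,
      SHBI.bp_eval_aeval]
    exact Finset.sum_congr rfl (fun l _ => by rw [SHBI.cc, SHBI.P, SHBI.P]; ring)
  have eR : (∑ l ∈ Finset.Icc 1 n, (n.choose l : ℝ) *
          ((a * (Nat.factorial (l - 1) : ℝ) + (ascPochhammer ℝ l).eval a) /
            (ascPochhammer ℝ (l + 1)).eval a) *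
          ((bernoulli l : ℚ) : ℝ) * aeval x (Polynomial.bernoulli (n - l)))
        + ((n : ℝ) / (a + 1)) * aeval x (Polynomial.bernoulli (n - 1))
        + (∑ j ∈ Finset.range n, 1 / ((j : ℝ) + a)) * aeval x (Polynomial.bernoulli n)
      = (SHBI.R a n).eval x := by
    rw [SHBI.R]
    simp only [Polynomial.eval_add, Polynomial.eval_finset_sum, Polynomial.eval_mul,
      Polynomial.eval_C, SHBI.bp_eval_aeval]
    rw [SHBI.Hh]
    congr 1
  rw [eL, eR]
  exact h
end

section
/- Let δ_u f(x) = (f(x)+f(x+u))/2 and δ_J = ∏_{i∈J} δ_{u_i} (composition). For odd k ≥ 1: δ_{u_1+⋯+u_k} = ∑_{j=1}^{k} ∑_{|J|=j} (-2)^{j-1} δ_J, and for even k ≥ 2: δ_{u_1+⋯+u_k} = Id - ∑_{j=1}^{k} ∑_{|J|=j} (-2)^{j-1} δ_J, as operators on functions ℝ → ℝ. -/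
/-- The discrete averaging operator `δ_u f (x) = (f x + f (x + u)) / 2`. -/
noncomputable def avgOp (u : ℝ) (f : ℝ → ℝ) : ℝ → ℝ := fun x => (f x + f (x + u)) / 2

/-- Composition of averaging operators over a list of shifts. -/
noncomputable def avgOpComp (l : List ℝ) (f : ℝ → ℝ) : ℝ → ℝ := l.foldr avgOp f

open Finset

lemma avgOp_left_comm : LeftCommutative avgOp :=
  ⟨fun a b g => by funext x; simp only [avgOp]; ring⟩

lemma avgOpComp_perm {l₁ l₂ : List ℝ} (h : l₁.Perm l₂) (f : ℝ → ℝ) :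
    avgOpComp l₁ f = avgOpComp l₂ f := by
  haveI := avgOp_left_comm
  exact h.foldr_eq f

lemma avgOpComp_sort_eq {k : ℕ} (u : Fin k → ℝ) (f : ℝ → ℝ) (J : Finset (Fin k)) (x : ℝ) :
    avgOpComp ((J.sort (· ≤ ·)).map u) f x
      = (∑ S ∈ J.powerset, f (x + ∑ i ∈ S, u i)) / 2 ^ J.card := by
  induction J using Finset.induction_on generalizing x with
  | empty => simp [avgOpComp]
  | @insert a s ha ih =>
    have hperm : List.Perm (((insert a s).sort (· ≤ ·)).map u)
        (u a :: ((s.sort (· ≤ ·)).map u)) := by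
      exact List.Perm.map u (((Finset.sort_perm_toList _ _).trans
        (Finset.toList_insert ha)).trans
        (List.Perm.cons a (Finset.sort_perm_toList _ _).symm))
    rw [avgOpComp_perm hperm]
    show (avgOpComp ((s.sort (· ≤ ·)).map u) f x
        + avgOpComp ((s.sort (· ≤ ·)).map u) f (x + u a)) / 2 = _
    rw [ih x, ih (x + u a), Finset.powerset_insert, Finset.sum_union, Finset.sum_image,
      Finset.card_insert_of_notMem ha]
    · have h1 : ∀ S ∈ s.powerset, f (x + ∑ i ∈ insert a S, u i) = f (x + u a + ∑ i ∈ S, u i) := by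
        intro S hS
        rw [Finset.mem_powerset] at hS
        rw [Finset.sum_insert (fun hc => ha (hS hc))]
        congr 1
        ring
      rw [Finset.sum_congr rfl h1, pow_succ]
      have h2 : ((2:ℝ) ^ s.card) ≠ 0 := by positivity
      field_simp
    · intro T₁ h₁ T₂ h₂ hT
      rw [Finset.mem_coe, Finset.mem_powerset] at h₁ h₂
      have e₁ : T₁ = (insert a T₁).erase a :=
        (Finset.erase_insert (fun hc => ha (h₁ hc))).symm
      have e₂ : T₂ = (insert a T₂).erase a :=
        (Finset.erase_insert (fun hc => ha (h₂ hc))).symm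
      rw [e₁, e₂, hT]
    · rw [Finset.disjoint_left]
      intro S hS hS'
      rw [Finset.mem_powerset] at hS
      rcases Finset.mem_image.mp hS' with ⟨T, _, rfl⟩
      exact ha (hS (Finset.mem_insert_self a T))

lemma superset_sum_neg_one_pow {k : ℕ} (S : Finset (Fin k)) :
    ∑ J ∈ (Finset.univ : Finset (Fin k)).powerset.filter (S ⊆ ·), (-1 : ℝ) ^ J.card
      = if S = Finset.univ then (-1 : ℝ) ^ k else 0 := by
  have himg : (Finset.univ : Finset (Fin k)).powerset.filter (S ⊆ ·)
      = ((Finset.univ \ S).powerset).image (fun T => S ∪ T) := by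
    ext J
    simp only [Finset.mem_filter, Finset.mem_powerset, Finset.mem_image, Finset.subset_univ,
      true_and]
    constructor
    · intro hSJ
      exact ⟨J \ S, by simp [Finset.sdiff_subset_sdiff, Finset.subset_univ],
        by rw [Finset.union_sdiff_of_subset hSJ]⟩
    · rintro ⟨T, _, rfl⟩
      exact Finset.subset_union_left
  have hinj : ∀ T₁ ∈ (Finset.univ \ S).powerset, ∀ T₂ ∈ (Finset.univ \ S).powerset,
      S ∪ T₁ = S ∪ T₂ → T₁ = T₂ := by
    intro T₁ h₁ T₂ h₂ h
    rw [Finset.mem_powerset] at h₁ h₂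
    have d₁ : Disjoint S T₁ := (Finset.disjoint_sdiff.mono_right h₁)
    have d₂ : Disjoint S T₂ := (Finset.disjoint_sdiff.mono_right h₂)
    rw [← Finset.union_sdiff_cancel_left d₁, ← Finset.union_sdiff_cancel_left d₂, h]
  rw [himg, Finset.sum_image hinj]
  have hcard : ∀ T ∈ (Finset.univ \ S).powerset,
      (-1 : ℝ) ^ (S ∪ T).card = (-1) ^ S.card * (-1) ^ T.card := by
    intro T hT
    rw [Finset.mem_powerset] at hT
    rw [Finset.card_union_of_disjoint (Finset.disjoint_sdiff.mono_right hT), pow_add]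
  rw [Finset.sum_congr rfl hcard, ← Finset.mul_sum]
  have hzint := Finset.sum_powerset_neg_one_pow_card (α := Fin k) (x := Finset.univ \ S)
  have hz : ∑ T ∈ (Finset.univ \ S).powerset, (-1 : ℝ) ^ T.card
      = if (Finset.univ \ S : Finset (Fin k)) = ∅ then (1:ℝ) else 0 := by
    calc ∑ T ∈ (Finset.univ \ S).powerset, (-1 : ℝ) ^ T.card
        = ((∑ T ∈ (Finset.univ \ S).powerset, (-1 : ℤ) ^ T.card : ℤ) : ℝ) := by
          push_cast; rfl
      _ = _ := by rw [hzint]; split <;> norm_num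
  rw [hz]
  by_cases hS : S = Finset.univ
  · subst hS
    simp [Finset.card_univ]
  · have hne : (Finset.univ \ S : Finset (Fin k)) ≠ ∅ := by
      rw [← Finset.nonempty_iff_ne_empty]
      exact Finset.sdiff_nonempty.mpr (fun h => hS (Finset.univ_subset_iff.mp h))
    simp [hne, hS]

theorem avgOp_sum (k : ℕ) (u : Fin k → ℝ) (f : ℝ → ℝ) (x : ℝ) :
    (Odd k → 1 ≤ k →
      avgOp (∑ i, u i) f x
        = ∑ j ∈ Finset.Icc 1 k, ∑ J ∈ Finset.powersetCard j (Finset.univ : Finset (Fin k)),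
            (-2 : ℝ) ^ (j - 1) * avgOpComp ((J.sort (· ≤ ·)).map u) f x)
    ∧ (Even k → 2 ≤ k →
      avgOp (∑ i, u i) f x
        = f x - ∑ j ∈ Finset.Icc 1 k, ∑ J ∈ Finset.powersetCard j (Finset.univ : Finset (Fin k)),
            (-2 : ℝ) ^ (j - 1) * avgOpComp ((J.sort (· ≤ ·)).map u) f x) := by
  classical
  set g : Finset (Fin k) → ℝ := fun S => f (x + ∑ i ∈ S, u i) with hg
  have stepA : ∀ j ∈ Finset.Icc 1 k, ∀ J ∈ Finset.powersetCard j (Finset.univ : Finset (Fin k)),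
      (-2 : ℝ) ^ (j - 1) * avgOpComp ((J.sort (· ≤ ·)).map u) f x
        = -(-1 : ℝ) ^ J.card / 2 * ∑ S ∈ J.powerset, g S := by
    intro j hj J hJ
    have hcard : J.card = j := (Finset.mem_powersetCard.mp hJ).2
    obtain ⟨m, rfl⟩ : ∃ m, j = m + 1 := by
      rcases Nat.exists_eq_add_of_le (Finset.mem_Icc.mp hj).1 with ⟨m, hm⟩
      exact ⟨m, by omega⟩
    rw [avgOpComp_sort_eq, hcard]
    simp only [Nat.add_sub_cancel]
    rw [show ((-2:ℝ))^m = (-1)^m * 2^m from by rw [show (-2:ℝ) = -1*2 by norm_num, mul_pow]]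
    rw [pow_succ, pow_succ]
    have h2 : ((2:ℝ) ^ m) ≠ 0 := by positivity
    field_simp
    ring
  have claimC : ∑ J ∈ (Finset.univ : Finset (Fin k)).powerset,
      ((-1 : ℝ) ^ J.card * ∑ S ∈ J.powerset, g S) = (-1 : ℝ) ^ k * g Finset.univ := by
    have swap : ∑ J ∈ (Finset.univ : Finset (Fin k)).powerset,
        ∑ S ∈ J.powerset, ((-1 : ℝ) ^ J.card * g S)
        = ∑ S ∈ (Finset.univ : Finset (Fin k)).powerset,
          ∑ J ∈ (Finset.univ : Finset (Fin k)).powerset.filter (S ⊆ ·),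
            ((-1 : ℝ) ^ J.card * g S) := by
      refine Finset.sum_comm' ?_
      intro J S
      simp only [Finset.mem_powerset, Finset.mem_filter, Finset.subset_univ, true_and, and_true]
    simp only [Finset.mul_sum]
    rw [swap]
    have hstep : ∀ S ∈ (Finset.univ : Finset (Fin k)).powerset,
        (∑ J ∈ (Finset.univ : Finset (Fin k)).powerset.filter (S ⊆ ·),
          ((-1 : ℝ) ^ J.card * g S))
        = (if S = Finset.univ then (-1 : ℝ) ^ k else 0) * g S := by
      intro S _
      rw [← Finset.sum_mul, superset_sum_neg_one_pow]
    rw [Finset.sum_congr rfl hstep, Finset.sum_eq_single Finset.univ]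
    · simp
    · intro b _ hb; simp [hb]
    · intro h; exact absurd (Finset.mem_powerset_self _) h
  have key : ∑ j ∈ Finset.Icc 1 k, ∑ J ∈ Finset.powersetCard j (Finset.univ : Finset (Fin k)),
      (-2 : ℝ) ^ (j - 1) * avgOpComp ((J.sort (· ≤ ·)).map u) f x
      = (f x - (-1 : ℝ) ^ k * f (x + ∑ i, u i)) / 2 := by
    rw [Finset.sum_congr rfl (fun j hj => Finset.sum_congr rfl (stepA j hj))]
    have hrange : Finset.range (k + 1) = insert 0 (Finset.Icc 1 k) := by
      ext j
      simp only [Finset.mem_range, Finset.mem_insert, Finset.mem_Icc]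
      omega
    have hpow : ∑ J ∈ (Finset.univ : Finset (Fin k)).powerset,
        (-(-1 : ℝ) ^ J.card / 2 * ∑ S ∈ J.powerset, g S)
        = (-(-1 : ℝ) ^ (∅ : Finset (Fin k)).card / 2 * ∑ S ∈ (∅ : Finset (Fin k)).powerset, g S)
          + ∑ j ∈ Finset.Icc 1 k, ∑ J ∈ Finset.powersetCard j (Finset.univ : Finset (Fin k)),
            (-(-1 : ℝ) ^ J.card / 2 * ∑ S ∈ J.powerset, g S) := by
      rw [Finset.sum_powerset, Finset.card_univ, Fintype.card_fin, hrange,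
        Finset.sum_insert (by simp), Finset.powersetCard_zero, Finset.sum_singleton]
    have hsum : ∑ J ∈ (Finset.univ : Finset (Fin k)).powerset,
        (-(-1 : ℝ) ^ J.card / 2 * ∑ S ∈ J.powerset, g S)
        = -(1/2) * ((-1 : ℝ) ^ k * g Finset.univ) := by
      rw [← claimC, Finset.mul_sum]
      exact Finset.sum_congr rfl fun J _ => by ring
    have h0 : (-(-1 : ℝ) ^ (∅ : Finset (Fin k)).card / 2
        * ∑ S ∈ (∅ : Finset (Fin k)).powerset, g S) = -(g ∅) / 2 := by
      simp
      ring
    have hg0 : g ∅ = f x := by simp [hg]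
    have hgu : g Finset.univ = f (x + ∑ i, u i) := rfl
    rw [hsum, h0, hg0, hgu] at hpow
    linarith [hpow]
  constructor
  · intro hk _
    rw [key, hk.neg_one_pow]
    simp only [avgOp]
    ring
  · intro hk _
    rw [key, hk.neg_one_pow]
    simp only [avgOp]
    ring
end
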